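/- arXiv:2302.09058 — 7 statements merged into one kernel-verified Lean document; each statement's English description precedes it below -/
import Mathlib

section
/- Let N be a norm on ℝ². Then for every ε > 0 there exists n₀ such that for every n ≥ n₀ there is an injective map p : Fin n → EuclideanSpace ℝ (Fin 2) for which the number of unordered pairs {x, y} of distinct indices with N (p x − p y) = 1 is at least (1/log₂ 3 − ε)·n·log₂ n. -/
/-!
If the unit sphere of `N` contains no segment, two unit spheres with distinct centres meet in a
set with empty interior, so by the Baire category theorem there is a unit triangle `{0, u, w}`
whose differences avoid the finite set `S - S`. Then `{0, u, w} + S` is a direct sum: it has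
`3 #S` points, and each of them has two more unit neighbours than the corresponding point of `S`.
Starting from a point, this gives `3 ^ k` points with at least `2k` unit neighbours each. If the
unit sphere does contain a segment, two arithmetic progressions along it span a complete
bipartite unit-distance graph, which is even better. Finally `⌊n / 3 ^ k⌋` translates of such a
set in general position, padded with arbitrary points, give `n` points with at least
`k ⌊n / 3 ^ k⌋ 3 ^ k` unit distances, and `k = log₃ n - O_ε(1)` makes this
`(1 - ε log₂ 3) n log₃ n`.
-/

/-- A norm on `ℝ^d`. -/
def IsNorm {d : ℕ} (N : EuclideanSpace ℝ (Fin d) → ℝ) : Prop :=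
  (∀ x, N x = 0 ↔ x = 0) ∧ (∀ (a : ℝ) (x), N (a • x) = |a| * N x) ∧
    ∀ x y, N (x + y) ≤ N x + N y

open Finset Pointwise

local notation "E2" => EuclideanSpace ℝ (Fin 2)

namespace IsNorm

variable {d : ℕ} {N : EuclideanSpace ℝ (Fin d) → ℝ}

def toSeminorm (hN : IsNorm N) : Seminorm ℝ (EuclideanSpace ℝ (Fin d)) :=
  Seminorm.of N hN.2.2 fun a x => by rw [hN.2.1, Real.norm_eq_abs]

theorem map_zero (hN : IsNorm N) : N 0 = 0 := (hN.1 0).2 rfl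

theorem map_neg (hN : IsNorm N) (x : EuclideanSpace ℝ (Fin d)) : N (-x) = N x :=
  map_neg_eq_map hN.toSeminorm x

theorem nonneg (hN : IsNorm N) (x : EuclideanSpace ℝ (Fin d)) : 0 ≤ N x :=
  apply_nonneg hN.toSeminorm x

theorem apply_ne_zero (hN : IsNorm N) {x : EuclideanSpace ℝ (Fin d)} (hx : x ≠ 0) : N x ≠ 0 :=
  fun h => hx ((hN.1 x).1 h)

theorem ne_zero_of_eq_one (hN : IsNorm N) {x : EuclideanSpace ℝ (Fin d)} (hx : N x = 1) :
    x ≠ 0 := by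
  rintro rfl
  simp [hN.map_zero] at hx

theorem inv_smul_self (hN : IsNorm N) {x : EuclideanSpace ℝ (Fin d)} (hx : x ≠ 0) :
    N ((N x)⁻¹ • x) = 1 := by
  rw [hN.2.1, abs_inv, abs_of_nonneg (hN.nonneg x), inv_mul_cancel₀ (hN.apply_ne_zero hx)]

theorem convexOn (hN : IsNorm N) : ConvexOn ℝ Set.univ N := hN.toSeminorm.convexOn

protected theorem continuous (hN : IsNorm N) : Continuous N :=
  hN.convexOn.locallyLipschitz.continuous

end IsNorm

theorem ConvexOn.le_apply_of_mem_Ioo {φ : ℝ → ℝ} (hφ : ConvexOn ℝ Set.univ φ) {a b μ : ℝ}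
    (hμ : μ ∈ Set.Ioo a b) (ha : φ a ≤ φ μ) (hb : φ b ≤ φ μ) (s : ℝ) : φ μ ≤ φ s := by
  rcases lt_trichotomy s μ with hsμ | rfl | hμs
  · exact hφ.le_left_of_right_le trivial trivial
      (by rw [openSegment_eq_Ioo (hsμ.trans hμ.2)]; exact ⟨hsμ, hμ.2⟩) hb
  · exact le_rfl
  · exact hφ.le_right_of_left_le trivial trivial
      (by rw [openSegment_eq_Ioo (hμ.1.trans hμs)]; exact ⟨hμ.1, hμs⟩) ha

def UnitSphereHasSegment {E : Type*} [AddCommGroup E] [Module ℝ E] (N : E → ℝ) : Prop :=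
  ∃ x y, x ≠ y ∧ segment ℝ x y ⊆ N ⁻¹' {1}

namespace IsNorm

variable {d : ℕ} {N : EuclideanSpace ℝ (Fin d) → ℝ}

theorem unitSphereHasSegment_of_mem_openSegment (hN : IsNorm N)
    {A B z : EuclideanSpace ℝ (Fin d)} (hAB : A ≠ B) (hA : N A ≤ 1) (hB : N B ≤ 1)
    (hz : z ∈ openSegment ℝ A B) (hz1 : N z = 1) : UnitSphereHasSegment N := by
  refine ⟨A, B, hAB, ?_⟩
  rw [segment_eq_image_lineMap]
  rintro _ ⟨s, hs, rfl⟩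
  rw [openSegment_eq_image_lineMap] at hz
  obtain ⟨μ, hμ, rfl⟩ := hz
  have hle : N (AffineMap.lineMap A B s) ≤ 1 :=
    (hN.convexOn.le_on_segment trivial trivial
      (segment_eq_image_lineMap ℝ A B ▸ Set.mem_image_of_mem _ hs)).trans (max_le hA hB)
  have hge := (hN.convexOn.comp_affineMap (AffineMap.lineMap A B)).le_apply_of_mem_Ioo hμ
    (by simpa [hz1] using hA) (by simpa [hz1] using hB) s
  simp only [Function.comp_apply, hz1] at hge
  exact le_antisymm hle hge

theorem unitSphereHasSegment_of_sub_of_add (hN : IsNorm N) {v c : EuclideanSpace ℝ (Fin d)}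
    {μ : ℝ} (hc : c ≠ 0) (hμ : 0 < μ) (hv : N v = 1) (hvc : N (v - c) = 1)
    (hvμc : N (v + μ • c) ≤ 1) : UnitSphereHasSegment N := by
  refine hN.unitSphereHasSegment_of_mem_openSegment (z := v) ?_ hvc.le hvμc ?_ hv
  · intro h
    have : (1 + μ) • c = 0 := by linear_combination (norm := module) -h
    exact hc ((smul_eq_zero.1 this).resolve_left (by positivity))
  · refine ⟨μ / (1 + μ), 1 / (1 + μ), by positivity, by positivity, by field_simp; ring, ?_⟩
    match_scalars <;> field_simp <;> ring

theorem exists_unit_triangle (hN : IsNorm N) {u v : EuclideanSpace ℝ (Fin d)} (hu : N u = 1)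
    (huv : LinearIndependent ℝ ![u, v]) : ∃ w, N w = 1 ∧ N (u - w) = 1 := by
  -- `γ` runs from `u` to `-u` avoiding `0`; along its projection onto the unit sphere the
  -- distance to `u` runs from `0` to `2`
  let γ : ℝ → EuclideanSpace ℝ (Fin d) := fun s => (1 - 2 * s) • u + (s * (1 - s)) • v
  have hγ : ∀ s, γ s ≠ 0 := fun s h => by
    obtain ⟨h1, h2⟩ := LinearIndependent.pair_iff.1 huv _ _ h
    nlinarith
  have hγc : Continuous γ := by fun_prop
  let f : ℝ → ℝ := fun s => N (u - (N (γ s))⁻¹ • γ s)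
  have hf : Continuous f := hN.continuous.comp (continuous_const.sub
    (((hN.continuous.comp hγc).inv₀ fun s => hN.apply_ne_zero (hγ s)).smul hγc))
  have h0 : f 0 = 0 := by simp [f, γ, hu, hN.map_zero]
  have h1 : f 1 = 2 := by
    have hγ1 : γ 1 = -u := by norm_num [γ]
    rw [show f 1 = N (u + u) by simp [f, hγ1, hN.map_neg, hu], ← two_smul ℝ, hN.2.1, hu]
    norm_num
  obtain ⟨s, -, hs⟩ := intermediate_value_Icc zero_le_one hf.continuousOn
    (show (1 : ℝ) ∈ Set.Icc (f 0) (f 1) by rw [h0, h1]; norm_num)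
  exact ⟨_, hN.inv_smul_self (hγ s), hs⟩

end IsNorm

theorem two_mul_ncard_lt_eq_ncard {α : Type*} [LinearOrder α] [Finite α] {r : α → α → Prop}
    (hr : ∀ a b, r a b → r b a) (hirr : ∀ a, ¬ r a a) :
    2 * {q : α × α | q.1 < q.2 ∧ r q.1 q.2}.ncard = {q : α × α | r q.1 q.2}.ncard := by
  have hsplit : {q : α × α | r q.1 q.2} =
      {q | q.1 < q.2 ∧ r q.1 q.2} ∪ Prod.swap '' {q | q.1 < q.2 ∧ r q.1 q.2} := by
    ext ⟨a, b⟩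
    rw [Set.image_swap_eq_preimage_swap]
    rcases lt_trichotomy a b with h | rfl | h
    · simp [h, h.not_gt]
    · simp [hirr]
    · simpa [h, h.not_gt] using ⟨hr a b, hr b a⟩
  have hdisj : Disjoint {q : α × α | q.1 < q.2 ∧ r q.1 q.2}
      (Prod.swap '' {q | q.1 < q.2 ∧ r q.1 q.2}) := by
    rw [Set.image_swap_eq_preimage_swap, Set.disjoint_left]
    exact fun q h h' => h.1.not_gt h'.1
  rw [hsplit, Set.ncard_union_eq hdisj, Set.ncard_image_of_injective _ Prod.swap_injective,
    two_mul]

section UnitDistanceGraph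

variable {E : Type*} [AddCommGroup E]

noncomputable def unitNeighbors (N : E → ℝ) (S : Finset E) (x : E) : Finset E :=
  {y ∈ S | N (x - y) = 1}

variable {N : E → ℝ}

theorem exists_injective_two_mul_ncard_eq (hN0 : N 0 ≠ 1) (hneg : ∀ x, N (-x) = N x)
    (P : Finset E) : ∃ p : Fin #P → E, Function.Injective p ∧
      2 * {q : Fin #P × Fin #P | q.1 < q.2 ∧ N (p q.1 - p q.2) = 1}.ncard =
        ∑ x ∈ P, #(unitNeighbors N P x) := by
  classical
  let p : Fin #P → E := fun i => P.equivFin.symm i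
  have hp : Function.Injective p := Subtype.val_injective.comp P.equivFin.symm.injective
  have hsum : #{z ∈ P ×ˢ P | N (z.1 - z.2) = 1} = ∑ x ∈ P, #(unitNeighbors N P x) := by
    simp only [unitNeighbors, card_filter, sum_product]
  refine ⟨p, hp, ?_⟩
  rw [two_mul_ncard_lt_eq_ncard (r := fun i j => N (p i - p j) = 1)
    (fun i j h => by rwa [← neg_sub, hneg]) (fun i => by simpa using hN0),
    ← hsum, ← Set.ncard_coe_finset {z ∈ P ×ˢ P | N (z.1 - z.2) = 1},
    ← Set.ncard_image_of_injective _ (hp.prodMap hp)]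
  congr 1
  ext ⟨x, y⟩
  simp only [Set.mem_image, Set.mem_ofPred_eq, coe_filter, mem_product, Prod.exists,
    Prod.map_apply, Prod.mk.injEq]
  constructor
  · rintro ⟨i, j, h, rfl, rfl⟩
    exact ⟨⟨(P.equivFin.symm i).2, (P.equivFin.symm j).2⟩, h⟩
  · rintro ⟨⟨hx, hy⟩, h⟩
    exact ⟨P.equivFin ⟨x, hx⟩, P.equivFin ⟨y, hy⟩, by simpa [p] using h, by simp [p], by simp [p]⟩

variable [DecidableEq E]

theorem card_sub_one_le_card_unitNeighbors {T : Finset E}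
    (hT : ∀ x ∈ T, ∀ y ∈ T, x ≠ y → N (x - y) = 1) {x : E} (hx : x ∈ T) :
    #T - 1 ≤ #(unitNeighbors N T x) := by
  rw [← card_erase_of_mem hx]
  exact card_le_card fun y hy => mem_filter.2
    ⟨mem_of_mem_erase hy, hT x hx y (mem_erase.1 hy).2 (mem_erase.1 hy).1.symm⟩

theorem neg_mem_sub_self {S : Finset E} {x : E} (hx : x ∈ S - S) : -x ∈ S - S := by
  obtain ⟨a, ha, b, hb, rfl⟩ := mem_sub.1 hx
  simpa using sub_mem_sub hb ha

theorem injOn_add_of_sub_notMem {T S : Finset E}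
    (h : ∀ t ∈ T, ∀ t' ∈ T, t ≠ t' → t - t' ∉ S - S) :
    Set.InjOn (fun p : E × E => p.1 + p.2) (T ×ˢ S : Set (E × E)) := by
  rintro ⟨t, s⟩ ⟨ht, hs⟩ ⟨t', s'⟩ ⟨ht', hs'⟩ (hsum : t + s = t' + s')
  by_cases htt : t = t'
  · subst htt
    simp_all
  · refine absurd (sub_mem_sub hs' hs) ?_
    rw [show s' - s = t - t' by linear_combination (norm := abel_nf) hsum.symm]
    exact h t ht t' ht' htt

theorem card_unitNeighbors_add_le (hN0 : N 0 ≠ 1) {T S : Finset E}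
    (hTS : Set.InjOn (fun p : E × E => p.1 + p.2) (T ×ˢ S : Set (E × E))) {t s : E}
    (ht : t ∈ T) (hs : s ∈ S) :
    #(unitNeighbors N T t) + #(unitNeighbors N S s) ≤ #(unitNeighbors N (T + S) (t + s)) := by
  rw [← card_image_of_injective _ (add_left_injective s),
    ← card_image_of_injective (unitNeighbors N S s) (add_right_injective t),
    ← card_union_of_disjoint]
  · refine card_le_card fun y hy => ?_
    rw [unitNeighbors, mem_filter]
    rcases mem_union.1 hy with hy | hy <;> obtain ⟨z, hz, rfl⟩ := mem_image.1 hy <;>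
      rw [unitNeighbors, mem_filter] at hz
    · exact ⟨add_mem_add hz.1 hs, by rw [add_sub_add_right_eq_sub, hz.2]⟩
    · exact ⟨add_mem_add ht hz.1, by rw [add_sub_add_left_eq_sub, hz.2]⟩
  · rw [disjoint_left]
    rintro _ h1 h2
    obtain ⟨t', ht', rfl⟩ := mem_image.1 h1
    obtain ⟨s', hs', hsum⟩ := mem_image.1 h2
    rw [unitNeighbors, mem_filter] at ht' hs'
    obtain ⟨rfl, -⟩ := Prod.ext_iff.1
      (hTS (x₁ := (t, s')) (x₂ := (t', s)) ⟨ht, hs'.1⟩ ⟨ht'.1, hs⟩ hsum)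
    exact hN0 (by simpa using ht'.2)

theorem exists_card_eq_sub_notMem [Infinite E] (D : Finset E) (hD : ∀ x ∈ D, -x ∈ D) (q : ℕ) :
    ∃ A : Finset E, #A = q ∧ ∀ a ∈ A, ∀ a' ∈ A, a ≠ a' → a - a' ∉ D := by
  induction q with
  | zero => exact ⟨∅, rfl, by simp⟩
  | succ q ih =>
    obtain ⟨A, hA, hAD⟩ := ih
    obtain ⟨a, ha⟩ := Infinite.exists_notMem_finset (A ∪ (A + D))
    have hfar : ∀ a' ∈ A, a - a' ∉ D := fun a' ha' h =>
      ha (mem_union_right _ (by simpa using add_mem_add ha' h))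
    refine ⟨insert a A, by rw [card_insert_of_notMem (fun h => ha (mem_union_left _ h)), hA], ?_⟩
    simp only [mem_insert]
    rintro b (rfl | hb) b' (rfl | hb') hbb'
    · exact absurd rfl hbb'
    · exact hfar b' hb'
    · exact fun h => hfar b hb (by simpa using hD _ h)
    · exact hAD b hb b' hb' hbb'

theorem exists_injective_mul_le_two_mul_ncard [Infinite E] (hN0 : N 0 ≠ 1)
    (hneg : ∀ x, N (-x) = N x) {S : Finset E} {m : ℕ}
    (hS : ∀ x ∈ S, m ≤ #(unitNeighbors N S x)) (n : ℕ) :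
    ∃ p : Fin n → E, Function.Injective p ∧
      m * (n / #S * #S) ≤ 2 * {q : Fin n × Fin n | q.1 < q.2 ∧ N (p q.1 - p q.2) = 1}.ncard := by
  obtain ⟨A, hA, hAD⟩ :=
    exists_card_eq_sub_notMem (S - S) (fun _ => neg_mem_sub_self) (n / #S)
  have hinj := injOn_add_of_sub_notMem hAD
  have hcard : #(A + S) = n / #S * #S := by rw [card_add_iff.2 hinj, hA]
  obtain ⟨P, hAP, rfl⟩ := Infinite.exists_superset_card_eq (A + S) n
    (hcard ▸ Nat.div_mul_le_self n #S)
  obtain ⟨p, hp, hcount⟩ := exists_injective_two_mul_ncard_eq hN0 hneg P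
  refine ⟨p, hp, ?_⟩
  rw [hcount, ← hcard]
  calc m * #(A + S) = ∑ _x ∈ A + S, m := by rw [sum_const, smul_eq_mul, mul_comm]
    _ ≤ ∑ x ∈ A + S, #(unitNeighbors N (A + S) x) := sum_le_sum fun x hx => by
        obtain ⟨a, ha, s, hs, rfl⟩ := mem_add.1 hx
        exact (hS s hs).trans (le_add_self.trans (card_unitNeighbors_add_le hN0 hinj ha hs))
    _ ≤ ∑ x ∈ A + S, #(unitNeighbors N P x) :=
        sum_le_sum fun x _ => card_le_card (filter_subset_filter _ hAP)
    _ ≤ ∑ x ∈ P, #(unitNeighbors N P x) := sum_le_sum_of_subset hAP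

end UnitDistanceGraph

theorem UnitSphereHasSegment.exists_forall_mem_Icc {E : Type*} [AddCommGroup E] [Module ℝ E]
    {N : E → ℝ} (hF : UnitSphereHasSegment N) {M : ℝ} (hM : 0 < M) :
    ∃ x v : E, v ≠ 0 ∧ ∀ r ∈ Set.Icc 0 M, N (x + r • v) = 1 := by
  obtain ⟨x, y, hxy, hseg⟩ := hF
  refine ⟨x, M⁻¹ • (y - x), smul_ne_zero (inv_ne_zero hM.ne') (sub_ne_zero.2 hxy.symm),
    fun r hr => hseg ?_⟩
  rw [segment_eq_image']
  exact ⟨r / M, ⟨div_nonneg hr.1 hM.le, div_le_one_of_le₀ hr.2 hM.le⟩,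
    by rw [smul_smul, div_eq_mul_inv]⟩

theorem IsNorm.exists_card_eq_add_of_unitSphereHasSegment {d : ℕ}
    {N : EuclideanSpace ℝ (Fin d) → ℝ} (hN : IsNorm N) (hF : UnitSphereHasSegment N) (a b : ℕ) :
    ∃ S : Finset (EuclideanSpace ℝ (Fin d)), #S = a + b ∧
      ∀ z ∈ S, min a b ≤ #(unitNeighbors N S z) := by
  classical
  obtain ⟨x, v, hv, hunit⟩ := hF.exists_forall_mem_Icc (M := a + b + 1) (by positivity)
  have hsmul : Function.Injective fun i : ℕ => (i : ℝ) • v :=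
    (smul_left_injective ℝ hv).comp Nat.cast_injective
  let A := (range a).image fun i : ℕ => (i : ℝ) • v
  let B := (Ico a (a + b)).image fun j : ℕ => x + (j : ℝ) • v
  have hA : #A = a := by rw [card_image_of_injective _ hsmul, card_range]
  have hB : #B = b :=
    (card_image_of_injective _ ((add_right_injective x).comp hsmul)).trans (by simp)
  have hAB : ∀ z ∈ A, ∀ z' ∈ B, N (z' - z) = 1 := by
    simp only [A, B, mem_image, mem_range, mem_Ico]
    rintro _ ⟨i, hi, rfl⟩ _ ⟨j, hj, rfl⟩
    have hij : (i : ℝ) ≤ j := by exact_mod_cast (hi.trans_le hj.1).le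
    have hj : (j : ℝ) ≤ a + b := by exact_mod_cast hj.2.le
    rw [add_sub_assoc, ← sub_smul]
    exact hunit _ ⟨sub_nonneg.2 hij, by linarith [(i.cast_nonneg : (0 : ℝ) ≤ i)]⟩
  refine ⟨A ∪ B, ?_, fun z hz => ?_⟩
  · rw [card_union_of_disjoint, hA, hB]
    refine disjoint_left.2 fun z hz hz' => ?_
    simpa [hN.map_zero] using hAB z hz z hz'
  · rcases mem_union.1 hz with hz | hz
    · refine (min_le_right a b).trans (hB ▸ card_le_card fun z' hz' => ?_)
      exact mem_filter.2 ⟨mem_union_right _ hz', by rw [← neg_sub, hN.map_neg, hAB z hz z' hz']⟩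
    · refine (min_le_left a b).trans (hA ▸ card_le_card fun z' hz' => ?_)
      exact mem_filter.2 ⟨mem_union_left _ hz', hAB z' hz' z hz⟩

/-- Half of the unit sphere, parametrized by a line: the parameter space of the Baire argument. -/
noncomputable def unitCurve (N : E2 → ℝ) (t : ℝ) : E2 := (N !₂[1, t])⁻¹ • !₂[1, t]

theorem unitCurve_apply_zero (N : E2 → ℝ) (t : ℝ) : unitCurve N t 0 = (N !₂[1, t])⁻¹ := by
  simp [unitCurve]

theorem unitCurve_apply_one (N : E2 → ℝ) (t : ℝ) : unitCurve N t 1 = (N !₂[1, t])⁻¹ * t := by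
  simp [unitCurve]

theorem toLp_one_ne_zero (t : ℝ) : !₂[1, t] ≠ 0 := fun h => by
  simpa using congrArg (· 0) h

theorem exists_eq_smul_of_mul_eq_mul {c v : E2} (hc : c ≠ 0) (h : c 0 * v 1 = c 1 * v 0) :
    ∃ μ : ℝ, v = μ • c := by
  have hc : c 0 ≠ 0 ∨ c 1 ≠ 0 := by
    by_contra! h0
    exact hc (by ext i; fin_cases i <;> simp [h0])
  rcases hc with h0 | h1
  · exact ⟨v 0 / c 0, by ext i; fin_cases i <;> simp <;> field_simp; linarith⟩
  · exact ⟨v 1 / c 1, by ext i; fin_cases i <;> simp <;> field_simp; linarith⟩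

theorem four_mul_le_three_pow {k : ℕ} (hk : 2 ≤ k) : 4 * k ≤ 3 ^ k := by
  induction k, hk using Nat.le_induction with
  | base => norm_num
  | succ k hk ih => rw [pow_succ]; omega

namespace IsNorm

variable {N : E2 → ℝ}

theorem unitCurve_eq_one (hN : IsNorm N) (t : ℝ) : N (unitCurve N t) = 1 :=
  hN.inv_smul_self (toLp_one_ne_zero t)

theorem continuous_unitCurve (hN : IsNorm N) : Continuous (unitCurve N) := by
  have he : Continuous fun t : ℝ => !₂[1, t] := by fun_prop
  exact ((hN.continuous.comp he).inv₀ fun t => hN.apply_ne_zero (toLp_one_ne_zero t)).smul he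

theorem unitCurve_injective (hN : IsNorm N) : Function.Injective (unitCurve N) := by
  intro s t h
  have h0 := congrArg (· 0) h
  have h1 := congrArg (· 1) h
  simp only [unitCurve_apply_zero, unitCurve_apply_one] at h0 h1
  rw [h0] at h1
  exact mul_left_cancel₀ (inv_ne_zero (hN.apply_ne_zero (toLp_one_ne_zero t))) h1

theorem linearIndependent_unitCurve (hN : IsNorm N) (t : ℝ) :
    LinearIndependent ℝ ![unitCurve N t, !₂[0, 1]] := by
  refine LinearIndependent.pair_iff.2 fun a b h => ?_
  have h0 := congrArg (· 0) h
  have h1 := congrArg (· 1) h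
  simp [unitCurve_apply_zero, unitCurve_apply_one] at h0 h1
  obtain rfl := h0.resolve_right (hN.apply_ne_zero (toLp_one_ne_zero t))
  simpa using h1

theorem unitSphereHasSegment_of_forall_unitCurve_sub (hN : IsNorm N) {c : E2} (hc : c ≠ 0)
    {t₀ t₁ : ℝ} (ht : t₀ < t₁) (h : ∀ t ∈ Set.Icc t₀ t₁, N (unitCurve N t - c) = 1) :
    UnitSphereHasSegment N := by
  -- Each point `Q` of the chord through the ends of the arc lies, with `Q - c`, in the unit ball
  -- and on the line through some `unitCurve N s` parallel to `c`; that line meets the unit sphere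
  -- in `unitCurve N s` and `unitCurve N s - c`, so unless it meets it in a segment, `Q` is one
  -- of them.
  by_contra hF
  refine hF ⟨_, _, hN.unitCurve_injective.ne ht.ne, fun Q hQ => ?_⟩
  let g : E2 →L[ℝ] ℝ := c 0 • EuclideanSpace.proj 1 - c 1 • EuclideanSpace.proj 0
  obtain ⟨s, hs, hgs⟩ : ∃ s ∈ Set.Icc t₀ t₁, g (unitCurve N s) = g Q := by
    have hgQ : g Q ∈ Set.uIcc (g (unitCurve N t₀)) (g (unitCurve N t₁)) := by
      rw [← segment_eq_uIcc]
      exact image_segment ℝ g.toLinearMap.toAffineMap _ _ ▸ Set.mem_image_of_mem g hQ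
    obtain ⟨s, hs, hgs⟩ := intermediate_value_uIcc
      (g.continuous.comp hN.continuous_unitCurve).continuousOn hgQ
    exact ⟨s, Set.uIcc_of_le ht.le ▸ hs, hgs⟩
  obtain ⟨μ, hμ⟩ : ∃ μ : ℝ, Q - unitCurve N s = μ • c := by
    apply exists_eq_smul_of_mul_eq_mul hc
    simp [g] at hgs
    simp only [PiLp.sub_apply]
    linarith
  rw [sub_eq_iff_eq_add'] at hμ
  have hQ1 : N Q ≤ 1 := (hN.convexOn.le_on_segment trivial trivial hQ).trans
    (max_le (hN.unitCurve_eq_one t₀).le (hN.unitCurve_eq_one t₁).le)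
  have hQc : N (Q - c) ≤ 1 := by
    have hQc : Q - c ∈ segment ℝ (unitCurve N t₀ - c) (unitCurve N t₁ - c) := by
      simpa [sub_eq_neg_add] using (mem_segment_translate ℝ (-c)).2 hQ
    exact (hN.convexOn.le_on_segment trivial trivial hQc).trans
      (max_le (h t₀ ⟨le_rfl, ht.le⟩).le (h t₁ ⟨ht.le, le_rfl⟩).le)
  rcases lt_trichotomy μ 0 with hμ0 | rfl | hμ0
  · refine (hF (hN.unitSphereHasSegment_of_sub_of_add (neg_ne_zero.2 hc) (neg_pos.2 hμ0)
      (h s hs) (by simpa using hN.unitCurve_eq_one s) ?_)).elim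
    convert hQc using 2
    rw [hμ]
    module
  · simpa [hμ] using hN.unitCurve_eq_one s
  · exact (hF (hN.unitSphereHasSegment_of_sub_of_add hc hμ0 (hN.unitCurve_eq_one s) (h s hs)
      (hμ ▸ hQ1))).elim

theorem exists_unitCurve_notMem (hN : IsNorm N) (hF : ¬ UnitSphereHasSegment N)
    (C : Finset E2) :
    ∃ t, unitCurve N t ∉ C ∧ ∀ c ∈ C, c ≠ 0 → N (unitCurve N t - c) ≠ 1 := by
  by_contra! h
  let F : C.erase 0 → Set ℝ := fun c =>
    {t | N (unitCurve N t - c) = 1} ∪ {t | unitCurve N t = c}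
  have hcover : ⋃ c, F c = Set.univ := by
    refine Set.eq_univ_of_forall fun t => Set.mem_iUnion.2 ?_
    by_cases ht : unitCurve N t ∈ C
    · exact ⟨⟨_, mem_erase.2 ⟨hN.ne_zero_of_eq_one (hN.unitCurve_eq_one t), ht⟩⟩, Or.inr rfl⟩
    · obtain ⟨c, hcC, hc0, hc⟩ := h t ht
      exact ⟨⟨c, mem_erase.2 ⟨hc0, hcC⟩⟩, Or.inl hc⟩
  have hclosed : ∀ c : E2, IsClosed {t | N (unitCurve N t - c) = 1} := fun c =>
    isClosed_eq (hN.continuous.comp (hN.continuous_unitCurve.sub continuous_const))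
      continuous_const
  have hclosed' : ∀ c : E2, IsClosed {t | unitCurve N t = c} := fun c =>
    isClosed_eq hN.continuous_unitCurve continuous_const
  obtain ⟨⟨c, hc⟩, hint⟩ := nonempty_interior_of_iUnion_of_closed
    (f := F) (fun c => (hclosed c).union (hclosed' c)) hcover
  have hempty : interior {t | unitCurve N t = c} = ∅ := by
    rw [interior_eq_empty_iff_dense_compl]
    exact Set.Countable.dense_compl ℝ
      (Set.Subsingleton.countable fun s hs t ht => hN.unitCurve_injective (hs.trans ht.symm))
  rw [interior_union_isClosed_of_interior_empty (hclosed c) hempty] at hint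
  obtain ⟨t, ht⟩ := hint
  obtain ⟨a, b, hab, hsub⟩ :=
    mem_nhds_iff_exists_Ioo_subset.1 (mem_interior_iff_mem_nhds.1 ht)
  have ha : a < (a + t) / 2 := by linarith [hab.1]
  exact hF (hN.unitSphereHasSegment_of_forall_unitCurve_sub (mem_erase.1 hc).1
    (by linarith [hab.1]) fun s hs => hsub (Set.Icc_subset_Ioo ha hab.2 hs))

theorem exists_card_eq_three_pow_of_not_unitSphereHasSegment (hN : IsNorm N)
    (hF : ¬ UnitSphereHasSegment N) (k : ℕ) :
    ∃ S : Finset E2, #S = 3 ^ k ∧ ∀ x ∈ S, 2 * k ≤ #(unitNeighbors N S x) := by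
  classical
  induction k with
  | zero => exact ⟨{0}, rfl, by simp⟩
  | succ k ih =>
    obtain ⟨S, hS, hdeg⟩ := ih
    obtain ⟨t, huS, ht⟩ := hN.exists_unitCurve_notMem hF (S - S)
    set u := unitCurve N t
    have hu : N u = 1 := hN.unitCurve_eq_one t
    obtain ⟨w, hw, huw⟩ := hN.exists_unit_triangle hu (hN.linearIndependent_unitCurve t)
    have hwu : N (w - u) = 1 := by rw [← neg_sub, hN.map_neg, huw]
    have hwS : w ∉ S - S := fun h => ht w h (hN.ne_zero_of_eq_one hw) huw
    have huwS : u - w ∉ S - S := fun h =>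
      ht _ h (hN.ne_zero_of_eq_one huw) (by rwa [sub_sub_cancel])
    have huS' : -u ∉ S - S := fun h => huS (by simpa using neg_mem_sub_self h)
    have hwS' : -w ∉ S - S := fun h => hwS (by simpa using neg_mem_sub_self h)
    have hwuS : w - u ∉ S - S := fun h => huwS (by simpa using neg_mem_sub_self h)
    let T : Finset E2 := {0, u, w}
    have hT : ∀ x ∈ T, ∀ y ∈ T, x ≠ y → N (x - y) = 1 ∧ x - y ∉ S - S := by
      simp only [T, mem_insert, mem_singleton]
      rintro x (rfl | rfl | rfl) y (rfl | rfl | rfl) hxy <;> simp_all [hN.map_neg]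
    have hTcard : #T = 3 := card_eq_three.2 ⟨0, u, w, (hN.ne_zero_of_eq_one hu).symm,
      (hN.ne_zero_of_eq_one hw).symm, sub_ne_zero.1 (hN.ne_zero_of_eq_one huw), rfl⟩
    have hinj := injOn_add_of_sub_notMem fun x hx y hy hxy => (hT x hx y hy hxy).2
    refine ⟨T + S, by rw [card_add_iff.2 hinj, hTcard, hS, pow_succ, mul_comm], fun x hx => ?_⟩
    obtain ⟨a, ha, s, hs, rfl⟩ := mem_add.1 hx
    have h1 := card_unitNeighbors_add_le (N := N) (by rw [hN.map_zero]; norm_num) hinj ha hs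
    have h2 := card_sub_one_le_card_unitNeighbors (fun x hx y hy hxy => (hT x hx y hy hxy).1) ha
    have h3 := hdeg s hs
    omega

theorem exists_card_eq_three_pow (hN : IsNorm N) {k : ℕ} (hk : 2 ≤ k) :
    ∃ S : Finset E2, #S = 3 ^ k ∧ ∀ x ∈ S, 2 * k ≤ #(unitNeighbors N S x) := by
  by_cases hF : UnitSphereHasSegment N
  · obtain ⟨S, hS, hdeg⟩ :=
      hN.exists_card_eq_add_of_unitSphereHasSegment hF (2 * k) (3 ^ k - 2 * k)
    have := four_mul_le_three_pow hk
    exact ⟨S, by omega, fun x hx => (hdeg x hx).trans' (le_min le_rfl (by omega))⟩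
  · exact hN.exists_card_eq_three_pow_of_not_unitSphereHasSegment hF k

end IsNorm

theorem le_mul_div_mul_three_pow {δ : ℝ} (hδ1 : δ ≤ 1) {n k t : ℕ} (hn0 : n ≠ 0)
    (hn : Nat.log 3 n = k + t) (ht : 2 ≤ δ * 3 ^ t) (hk : 2 * (t + 1) ≤ δ * k) :
    (1 - δ) * n * Real.logb 3 n ≤ (k * (n / 3 ^ k * 3 ^ k) : ℕ) := by
  have hlogb : Real.logb 3 n < k + t + 1 := by
    have := Nat.lt_floor_add_one (Real.logb 3 n)
    rw [show (3 : ℝ) = (3 : ℕ) by norm_num, Real.natFloor_logb_natCast, hn] at this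
    exact_mod_cast this
  have hpow : (3 : ℝ) ^ k * 3 ^ t ≤ n := by
    rw [← pow_add, ← hn]
    exact_mod_cast Nat.pow_log_le_self 3 hn0
  have hdiv : (n : ℝ) - 3 ^ k ≤ (n / 3 ^ k * 3 ^ k : ℕ) := by
    have : (n : ℝ) < (n / 3 ^ k * 3 ^ k : ℕ) + 3 ^ k := by
      exact_mod_cast Nat.lt_div_mul_add (a := n) (pow_pos three_pos k)
    linarith
  have h3 : ∀ m : ℕ, (0 : ℝ) < 3 ^ m := fun m => pow_pos three_pos m
  have hδ : 0 < δ := by nlinarith [h3 t]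
  have h3k : 2 * 3 ^ k ≤ δ * n := by
    nlinarith [mul_le_mul_of_nonneg_left ht (h3 k).le, mul_le_mul_of_nonneg_left hpow hδ.le]
  have hn : (0 : ℝ) ≤ n := n.cast_nonneg
  calc (1 - δ) * n * Real.logb 3 n ≤ (1 - δ) * n * (k + t + 1) := by gcongr
    _ ≤ k * (n - 3 ^ k) := by
        nlinarith [mul_le_mul_of_nonneg_left hk hn, mul_le_mul_of_nonneg_left h3k k.cast_nonneg,
          mul_nonneg (mul_nonneg hδ.le hn) t.cast_nonneg]
    _ ≤ (k * (n / 3 ^ k * 3 ^ k) : ℕ) := by push_cast; gcongr; exact_mod_cast hdiv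

theorem exists_le_mul_div_mul_three_pow {δ : ℝ} (hδ : 0 < δ) :
    ∃ n₀ : ℕ, ∀ n ≥ n₀, ∃ k, 2 ≤ k ∧
      (1 - δ) * n * Real.logb 3 n ≤ (k * (n / 3 ^ k * 3 ^ k) : ℕ) := by
  wlog hδ1 : δ ≤ 1 generalizing δ
  · obtain ⟨n₀, h⟩ := this one_pos le_rfl
    refine ⟨n₀, fun n hn => ?_⟩
    obtain ⟨k, hk, hbound⟩ := h n hn
    refine ⟨k, hk, le_trans ?_ hbound⟩
    have : 0 ≤ (n : ℝ) * Real.logb 3 n := mul_nonneg n.cast_nonneg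
      ((Nat.cast_nonneg _).trans (by simpa using Real.natLog_le_logb n 3))
    nlinarith
  -- `3 ^ t ≥ 2 / δ`, so for `k = log₃ n - t` the `⌊n / 3 ^ k⌋` blocks of `3 ^ k` points miss at
  -- most `δ n / 2` of the `n` points
  obtain ⟨t, ht⟩ := pow_unbounded_of_one_lt (2 / δ) (by norm_num : (1 : ℝ) < 3)
  obtain ⟨M, hM⟩ := exists_nat_ge (2 * (t + 1) / δ)
  refine ⟨3 ^ (M + 2 + t), fun n hn => ⟨Nat.log 3 n - t, ?_⟩⟩
  have hlog : M + 2 + t ≤ Nat.log 3 n := Nat.le_log_of_pow_le (by norm_num) hn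
  refine ⟨by omega, le_mul_div_mul_three_pow hδ1 (Nat.pos_iff_ne_zero.1
    ((pow_pos three_pos _).trans_le hn)) (by omega) ((div_lt_iff₀' hδ).1 ht).le ?_⟩
  rw [div_le_iff₀ hδ] at hM
  have : (M : ℝ) ≤ (Nat.log 3 n - t : ℕ) := by exact_mod_cast (show M ≤ _ by omega)
  nlinarith

/-- For every norm `N` on `ℝ²` and every `ε > 0`, for all sufficiently large `n`
there are `n` points in `ℝ²` determining at least `(1/log₂ 3 - ε)·n·log₂ n`
unit distances according to `N`. -/
theorem thm_planar_unit_distances_lower_bound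
    (N : EuclideanSpace ℝ (Fin 2) → ℝ) (hN : IsNorm N) (ε : ℝ) (hε : 0 < ε) :
    ∃ n₀ : ℕ, ∀ n : ℕ, n₀ ≤ n →
      ∃ p : Fin n → EuclideanSpace ℝ (Fin 2), Function.Injective p ∧
        (1 / Real.logb 2 3 - ε) * n * Real.logb 2 n ≤
          (Set.ncard {q : Fin n × Fin n | q.1 < q.2 ∧ N (p q.1 - p q.2) = 1} : ℝ) := by
  have hlog23 : 0 < Real.logb 2 3 := Real.logb_pos (by norm_num) (by norm_num)
  obtain ⟨n₀, hn₀⟩ := exists_le_mul_div_mul_three_pow (mul_pos hε hlog23)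
  refine ⟨n₀, fun n hn => ?_⟩
  obtain ⟨k, hk, hbound⟩ := hn₀ n hn
  obtain ⟨S, hS, hdeg⟩ := hN.exists_card_eq_three_pow hk
  obtain ⟨p, hp, hcount⟩ :=
    exists_injective_mul_le_two_mul_ncard (N := N) (by rw [hN.map_zero]; norm_num) hN.map_neg hdeg n
  refine ⟨p, hp, ?_⟩
  rw [hS] at hcount
  calc (1 / Real.logb 2 3 - ε) * n * Real.logb 2 n
      = (1 - ε * Real.logb 2 3) * n * Real.logb 3 n := by
        rw [← Real.mul_logb (b := 3) (c := n) (by norm_num) (by norm_num) (by norm_num)]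
        field_simp
    _ ≤ (k * (n / 3 ^ k * 3 ^ k) : ℕ) := hbound
    _ ≤ _ := by exact_mod_cast Nat.le_of_mul_le_mul_left (by rwa [← mul_assoc]) two_pos
end

section
/- For every integer d ≥ 1, every B ∈ 𝓑_d and every μ > 0 there exists B' ∈ 𝓑_d such that B' is the convex hull of a finite set of points, the Hausdorff distance d_H(B, B') is less than μ, and every supporting-hyperplane section of B' has Euclidean diameter less than μ; that is, for every nonzero a ∈ ℝ^d and every b ∈ ℝ such that ⟨a, x⟩ ≤ b for all x ∈ B', the set {x ∈ B' : ⟨a, x⟩ = b} has Euclidean diameter less than μ. (Since B' has 0 in its interior, this says exactly that all facets of the polytope B' have diameter less than μ.) -/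
/-!
Let `γ` be the gauge of `B` and, for a small `c > 0`, let `K = {x | γ x ^ 2 + c ^ 2 ‖x‖ ^ 2 ≤ 1}`.
Then `K ⊆ B` is Hausdorff-close to `B`, and the Euclidean term makes `K` uniformly convex: with
`t = ‖x - y‖`, the ball of radius `≍ t ^ 2` about the midpoint of `x, y ∈ K` stays inside `K`.
Let `P` be the convex hull of a finite symmetric `δ`-net of `K`. If `x, y` lie on a supporting
hyperplane `H` of `P`, pushing their midpoint outward across `H` by `≍ t ^ 2` gives a point of `K`
at that distance from `P`; since `P` is `δ`-dense in `K`, `t ^ 2 ≲ δ`.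
-/

/-- Membership in `𝓑_d`: a compact, convex, `0`-symmetric body in `ℝ^d`
with `0` in its interior. -/
def IsUnitBall {d : ℕ} (B : Set (EuclideanSpace ℝ (Fin d))) : Prop :=
  IsCompact B ∧ Convex ℝ B ∧ -B = B ∧ (0 : EuclideanSpace ℝ (Fin d)) ∈ interior B

open Metric Set
open scoped NNReal RealInnerProductSpace Topology

variable {E : Type*}

lemma Real.sqrt_add_sq_add_sq_le (a b c d : ℝ) :
    √((a + c) ^ 2 + (b + d) ^ 2) ≤ √(a ^ 2 + b ^ 2) + √(c ^ 2 + d ^ 2) := by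
  have hcs : a * c + b * d ≤ √(a ^ 2 + b ^ 2) * √(c ^ 2 + d ^ 2) := by
    rw [← Real.sqrt_mul (by positivity)]
    exact Real.le_sqrt_of_sq_le (by nlinarith [sq_nonneg (a * d - b * c)])
  rw [Real.sqrt_le_left (by positivity)]
  nlinarith [Real.sq_sqrt (by positivity : 0 ≤ a ^ 2 + b ^ 2),
    Real.sq_sqrt (by positivity : 0 ≤ c ^ 2 + d ^ 2)]

namespace Seminorm

variable [AddCommGroup E] [Module ℝ E] (p q : Seminorm ℝ E)

noncomputable def hypot : Seminorm ℝ E :=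
  Seminorm.of (fun x => √(p x ^ 2 + q x ^ 2))
    (fun x y => (Real.sqrt_le_sqrt (by
        gcongr <;> first | exact apply_nonneg _ _ | exact map_add_le_add _ _ _)).trans
      (Real.sqrt_add_sq_add_sq_le _ _ _ _))
    (fun a x => by
      simp only [map_smul_eq_mul, mul_pow, ← mul_add, Real.sqrt_mul (sq_nonneg _),
        Real.sqrt_sq_eq_abs, Real.norm_eq_abs, abs_abs])

lemma hypot_apply (x : E) : p.hypot q x = √(p x ^ 2 + q x ^ 2) := rfl

lemma sq_hypot (x : E) : p.hypot q x ^ 2 = p x ^ 2 + q x ^ 2 :=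
  Real.sq_sqrt (by positivity)

lemma le_hypot_left (x : E) : p x ≤ p.hypot q x :=
  Real.le_sqrt_of_sq_le (by nlinarith [sq_nonneg (q x)])

lemma hypot_le_add (x : E) : p.hypot q x ≤ p x + q x := by
  rw [hypot_apply, Real.sqrt_le_left (by positivity)]
  nlinarith [mul_nonneg (apply_nonneg p x) (apply_nonneg q x)]

end Seminorm

theorem IsCompact.exists_finite_neg_eq_net [SeminormedAddCommGroup E] {K : Set E}
    (hK : IsCompact K) (hKneg : -K = K) {δ : ℝ} (hδ : 0 < δ) :
    ∃ S : Set E, S.Finite ∧ S ⊆ K ∧ -S = S ∧ ∀ x ∈ K, ∃ s ∈ S, dist x s ≤ δ := by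
  obtain ⟨T, hTK, hTfin, hKT⟩ := hK.finite_cover_balls hδ
  refine ⟨T ∪ -T, hTfin.union hTfin.neg, union_subset hTK ?_,
    by rw [union_neg, neg_neg, union_comm], fun x hx => ?_⟩
  · rw [← hKneg]; exact neg_subset_neg.2 hTK
  · obtain ⟨s, hs, hxs⟩ := mem_iUnion₂.1 (hKT hx)
    exact ⟨s, Or.inl hs, (mem_ball.1 hxs).le⟩

section NormedSpace

variable [SeminormedAddCommGroup E] [NormedSpace ℝ E]

def IsUniformlyConvex (c : ℝ) (K : Set E) : Prop :=
  ∀ x ∈ K, ∀ y ∈ K, closedBall (midpoint ℝ x y) (c * ‖x - y‖ ^ 2) ⊆ K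

lemma Seminorm.isUniformlyConvex_closedBall (N : Seminorm ℝ E) {κ L : ℝ} (hL : 0 < L)
    (hN : ∀ v, N v ≤ L * ‖v‖)
    (hmid : ∀ x y, N (midpoint ℝ x y) ^ 2 ≤ (N x ^ 2 + N y ^ 2) / 2 - κ * ‖x - y‖ ^ 2) :
    IsUniformlyConvex (κ / (2 * L)) (N.closedBall 0 1) := by
  intro x hx y hy z hz
  rw [mem_closedBall_zero] at hx hy ⊢
  rw [Metric.mem_closedBall, dist_eq_norm] at hz
  set m := midpoint ℝ x y
  have hm : N m ≤ 1 - κ * ‖x - y‖ ^ 2 / 2 := by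
    have hm2 : N m ^ 2 ≤ 1 - κ * ‖x - y‖ ^ 2 := by
      nlinarith [hmid x y, apply_nonneg N x, apply_nonneg N y]
    nlinarith [apply_nonneg N m, sq_nonneg (κ * ‖x - y‖ ^ 2)]
  have hzm : L * ‖z - m‖ ≤ κ * ‖x - y‖ ^ 2 / 2 :=
    calc L * ‖z - m‖ ≤ L * (κ / (2 * L) * ‖x - y‖ ^ 2) := by gcongr
      _ = κ * ‖x - y‖ ^ 2 / 2 := by field_simp
  calc N z = N (m + (z - m)) := by rw [add_sub_cancel]
    _ ≤ N m + L * ‖z - m‖ := (map_add_le_add N _ _).trans (by gcongr; exact hN _)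
    _ ≤ 1 := by linarith

lemma Seminorm.hypot_norm_le (p : Seminorm ℝ E) (c : ℝ≥0) {M : ℝ} (hp : ∀ v, p v ≤ M * ‖v‖)
    (v : E) :
    p.hypot (c • normSeminorm ℝ E) v ≤ (M + c) * ‖v‖ := by
  refine (hypot_le_add _ _ v).trans ?_
  simp only [smul_apply, coe_normSeminorm, NNReal.smul_def, smul_eq_mul]
  linarith [hp v]

lemma Seminorm.exists_mem_hypot_closedBall_dist_le (p : Seminorm ℝ E) (c : ℝ≥0) {x : E} {R : ℝ}
    (hpx : p x ≤ 1) (hxR : ‖x‖ ≤ R) :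
    ∃ y ∈ (p.hypot (c • normSeminorm ℝ E)).closedBall 0 1, dist x y ≤ c * R ^ 2 := by
  have hR : 0 ≤ R := (norm_nonneg x).trans hxR
  have hcR : 0 < 1 + c * R := by positivity
  refine ⟨(1 + c * R)⁻¹ • x, ?_, ?_⟩
  · rw [mem_closedBall_zero, map_smul_eq_mul, Real.norm_of_nonneg (by positivity),
      inv_mul_le_iff₀ hcR, mul_one]
    refine (hypot_le_add _ _ x).trans ?_
    simp only [smul_apply, coe_normSeminorm, NNReal.smul_def, smul_eq_mul]
    gcongr
  · have hs : (1 + c * R)⁻¹ * (1 + c * R) = 1 := inv_mul_cancel₀ hcR.ne'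
    have hs1 : 0 ≤ 1 - (1 + c * R)⁻¹ := sub_nonneg.2 (inv_le_one_of_one_le₀ (by nlinarith))
    calc dist x ((1 + c * R)⁻¹ • x) = (1 - (1 + c * R)⁻¹) * ‖x‖ := by
          rw [dist_eq_norm, ← norm_smul_of_nonneg hs1, sub_smul, one_smul]
      _ ≤ (c * R) * R := by gcongr; nlinarith [mul_nonneg hs1 (by positivity : (0 : ℝ) ≤ c * R)]
      _ = c * R ^ 2 := by ring

end NormedSpace

section InnerProductSpace

variable [NormedAddCommGroup E] [InnerProductSpace ℝ E]

lemma Seminorm.hypot_norm_midpoint_sq_le (p : Seminorm ℝ E) (c : ℝ≥0) (x y : E) :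
    p.hypot (c • normSeminorm ℝ E) (midpoint ℝ x y) ^ 2 ≤
      (p.hypot (c • normSeminorm ℝ E) x ^ 2 + p.hypot (c • normSeminorm ℝ E) y ^ 2) / 2
        - (c : ℝ) ^ 2 / 4 * ‖x - y‖ ^ 2 := by
  have hmid : midpoint ℝ x y = (2 : ℝ)⁻¹ • (x + y) := by
    rw [midpoint_eq_smul_add, invOf_eq_inv]
  have hp : p (midpoint ℝ x y) ≤ (p x + p y) / 2 := by
    rw [hmid, map_smul_eq_mul, Real.norm_of_nonneg (by norm_num)]
    linarith [map_add_le_add p x y]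
  have hnorm : ‖midpoint ℝ x y‖ ^ 2 = (‖x‖ ^ 2 + ‖y‖ ^ 2) / 2 - ‖x - y‖ ^ 2 / 4 := by
    rw [hmid, norm_smul, Real.norm_of_nonneg (by norm_num)]
    nlinarith [parallelogram_law_with_norm ℝ x y]
  simp only [Seminorm.sq_hypot, smul_apply, coe_normSeminorm, NNReal.smul_def, smul_eq_mul,
    mul_pow, hnorm]
  nlinarith [apply_nonneg p (midpoint ℝ x y), apply_nonneg p x, apply_nonneg p y,
    sq_nonneg (p x - p y)]

lemma Seminorm.isUniformlyConvex_hypot_closedBall (p : Seminorm ℝ E) {c : ℝ≥0} (hc : 0 < c)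
    {M : ℝ} (hM : 0 ≤ M) (hp : ∀ v, p v ≤ M * ‖v‖) :
    IsUniformlyConvex ((c : ℝ) ^ 2 / 4 / (2 * (M + c)))
      ((p.hypot (c • normSeminorm ℝ E)).closedBall 0 1) :=
  isUniformlyConvex_closedBall _ (by positivity) (p.hypot_norm_le c hp)
    (p.hypot_norm_midpoint_sq_le c)

theorem exists_isUniformlyConvex_subset_near {B : Set E} (hBc : IsCompact B)
    (hBconv : Convex ℝ B) (hBneg : -B = B) (hB0 : (0 : E) ∈ interior B) {η : ℝ} (hη : 0 < η) :
    ∃ K : Set E, ∃ c > 0, ∃ ρ > 0, IsCompact K ∧ Convex ℝ K ∧ -K = K ∧ K ⊆ B ∧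
      closedBall 0 ρ ⊆ K ∧ (∀ x ∈ B, ∃ y ∈ K, dist x y ≤ η) ∧ IsUniformlyConvex c K := by
  have hB : B ∈ 𝓝 (0 : E) := mem_interior_iff_mem_nhds.1 hB0
  obtain ⟨r, hr, hrB⟩ := Metric.mem_nhds_iff.1 hB
  obtain ⟨R, hR, hBR⟩ := hBc.isBounded.subset_closedBall_lt 0 0
  have hBbal : Balanced ℝ B := (balanced_iff_neg_mem hBconv).2 fun x hx => by
    rw [← hBneg]; simpa using hx
  set γ := gaugeSeminorm hBbal hBconv (absorbent_nhds_zero hB)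
  have hγ : ∀ v, γ v ≤ r⁻¹ * ‖v‖ := fun v =>
    (gauge_mono (absorbent_ball_zero hr) hrB v).trans_eq (by rw [gauge_ball hr.le]; ring)
  set c : ℝ≥0 := ⟨η / R ^ 2, by positivity⟩
  have hc : 0 < c := show 0 < η / R ^ 2 by positivity
  set N := γ.hypot (c • normSeminorm ℝ E)
  have hρK : closedBall 0 (r⁻¹ + c)⁻¹ ⊆ N.closedBall 0 1 := fun x hx => by
    rw [Seminorm.mem_closedBall_zero]
    refine (γ.hypot_norm_le c hγ x).trans ?_
    rw [← le_inv_mul_iff₀ (by positivity), mul_one]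
    simpa using hx
  have hKB : N.closedBall 0 1 ⊆ B := fun x hx => by
    rw [← hBc.isClosed.closure_eq, ← gauge_le_one_iff_mem_closure hBconv hB]
    exact (γ.le_hypot_left _ x).trans ((Seminorm.mem_closedBall_zero _).1 hx)
  have hKc : IsClosed (N.closedBall 0 1) := by
    rw [Seminorm.closedBall_zero_eq]
    exact isClosed_le (Seminorm.continuous' (r := 1)
      (Filter.mem_of_superset (closedBall_mem_nhds _ (by positivity)) hρK)) continuous_const
  refine ⟨N.closedBall 0 1, _, by positivity, _, by positivity, hBc.of_isClosed_subset hKc hKB,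
    Seminorm.convex_closedBall _ _ _, by rw [Seminorm.neg_closedBall, neg_zero], hKB, hρK,
    fun x hx => ?_, γ.isUniformlyConvex_hypot_closedBall hc (by positivity) hγ⟩
  obtain ⟨y, hyK, hxy⟩ := γ.exists_mem_hypot_closedBall_dist_le c (gauge_le_one_of_mem hx)
    (mem_closedBall_zero_iff.1 (hBR hx))
  exact ⟨y, hyK, hxy.trans_eq (by change η / R ^ 2 * R ^ 2 = η; field_simp)⟩

theorem IsUniformlyConvex.diam_inter_supportingHyperplane_le {K P : Set E} {c η : ℝ}
    (hK : IsUniformlyConvex c K) (hc : 0 < c) (hPK : P ⊆ K)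
    (hKP : ∀ x ∈ K, ∃ p ∈ P, dist x p ≤ η) {a : E} (ha : a ≠ 0) {b : ℝ}
    (hb : ∀ x ∈ P, ⟪a, x⟫ ≤ b) :
    diam {x ∈ P | ⟪a, x⟫ = b} ≤ √(η / c) := by
  refine diam_le_of_forall_dist_le (Real.sqrt_nonneg _) ?_
  rintro x ⟨hxP, hxb⟩ y ⟨hyP, hyb⟩
  have hna : 0 < ‖a‖ := norm_pos_iff.2 ha
  set t := ‖x - y‖
  set z := midpoint ℝ x y + (c * t ^ 2 / ‖a‖) • a
  have hzK : z ∈ K := hK x (hPK hxP) y (hPK hyP) <| by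
    rw [Metric.mem_closedBall, dist_eq_norm, add_sub_cancel_left, norm_smul,
      Real.norm_of_nonneg (by positivity), div_mul_cancel₀ _ hna.ne']
  have hz : ⟪a, z⟫ = b + c * t ^ 2 * ‖a‖ := by
    rw [inner_add_right, midpoint_eq_smul_add, invOf_eq_inv, inner_smul_right, inner_add_right,
      hxb, hyb, real_inner_smul_right, real_inner_self_eq_norm_sq]
    field_simp
    ring
  obtain ⟨p, hpP, hzp⟩ := hKP z hzK
  have hgap : ⟪a, z⟫ - ⟪a, p⟫ ≤ ‖a‖ * η := by
    rw [← inner_sub_right]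
    exact (real_inner_le_norm a (z - p)).trans (by rw [← dist_eq_norm]; gcongr)
  have hct : c * t ^ 2 ≤ η := by nlinarith [hb p hpP]
  rw [dist_eq_norm]
  exact Real.le_sqrt_of_sq_le (by rwa [le_div_iff₀ hc, mul_comm])

theorem closedBall_subset_of_forall_exists_dist_le [CompleteSpace E] {C : Set E}
    (hC : Convex ℝ C) (hCc : IsClosed C) {z : E} {ρ η : ℝ} (hη : 0 ≤ η)
    (h : ∀ x ∈ closedBall z ρ, ∃ c ∈ C, dist x c ≤ η) :
    closedBall z (ρ - η) ⊆ C := by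
  intro y hy
  by_contra hyC
  obtain ⟨f, u, hfC, hfy⟩ := geometric_hahn_banach_closed_point hC hCc hyC
  set a := (InnerProductSpace.toDual ℝ E).symm f
  have ha : ∀ x, ⟪a, x⟫ = f x := fun x => InnerProductSpace.toDual_symm_apply
  set v := (η / ‖a‖) • a
  have hv : ‖v‖ ≤ η := by
    rcases eq_or_ne a 0 with ha0 | ha0
    · simp [v, ha0, hη]
    · rw [norm_smul, Real.norm_of_nonneg (by positivity),
        div_mul_cancel₀ _ (norm_ne_zero_iff.2 ha0)]
  have hav : ⟪a, v⟫ = η * ‖a‖ := by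
    rcases eq_or_ne a 0 with ha0 | ha0
    · simp [v, ha0]
    · rw [real_inner_smul_right, real_inner_self_eq_norm_sq]
      field_simp
  obtain ⟨c, hcC, hyc⟩ := h (y + v) <| by
    rw [mem_closedBall] at hy ⊢
    calc dist (y + v) z ≤ dist (y + v) y + dist y z := dist_triangle _ _ _
      _ ≤ ρ := by rw [dist_self_add_left]; linarith
  have hgap : ⟪a, y + v⟫ - ⟪a, c⟫ ≤ ‖a‖ * η := by
    rw [← inner_sub_right]
    exact (real_inner_le_norm a _).trans (by rw [← dist_eq_norm]; gcongr)
  rw [inner_add_right, hav, ha, ha] at hgap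
  linarith [hfC c hcC]

end InnerProductSpace

theorem thm_approximating_polytope_small_facets_general (d : ℕ)
    (B : Set (EuclideanSpace ℝ (Fin d))) (hB : IsUnitBall B) (μ : ℝ) (hμ : 0 < μ) :
    ∃ B' : Set (EuclideanSpace ℝ (Fin d)), IsUnitBall B' ∧
      (∃ S : Finset (EuclideanSpace ℝ (Fin d)),
        B' = convexHull ℝ (S : Set (EuclideanSpace ℝ (Fin d)))) ∧
      Metric.hausdorffDist B B' < μ ∧
      ∀ a : EuclideanSpace ℝ (Fin d), a ≠ 0 → ∀ b : ℝ,
        (∀ x ∈ B', (inner ℝ a x : ℝ) ≤ b) →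
        Metric.diam {x ∈ B' | (inner ℝ a x : ℝ) = b} < μ := by
  obtain ⟨hBc, hBconv, hBneg, hB0⟩ := hB
  obtain ⟨K, c, hc, ρ, hρ, hKc, hKconv, hKneg, hKB, hρK, hBK, hK⟩ :=
    exists_isUniformlyConvex_subset_near hBc hBconv hBneg hB0 (by positivity : 0 < μ / 4)
  set δ := min (ρ / 2) (min (μ / 4) (c * μ ^ 2 / 2))
  have hδ : 0 < δ := by positivity
  have hδρ : δ ≤ ρ / 2 := min_le_left _ _
  have hδμ : δ ≤ μ / 4 := (min_le_right _ _).trans (min_le_left _ _)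
  have hδc : δ ≤ c * μ ^ 2 / 2 := (min_le_right _ _).trans (min_le_right _ _)
  obtain ⟨S, hSfin, hSK, hSneg, hKS⟩ := hKc.exists_finite_neg_eq_net hKneg hδ
  set P := convexHull ℝ S
  have hPc : IsCompact P := hSfin.isCompact_convexHull (𝕜 := ℝ)
  have hPK : P ⊆ K := convexHull_min hSK hKconv
  have hKP : ∀ x ∈ K, ∃ p ∈ P, dist x p ≤ δ := fun x hx =>
    (hKS x hx).imp fun s hs => ⟨subset_convexHull ℝ S hs.1, hs.2⟩
  have hballP : closedBall 0 (ρ - δ) ⊆ P :=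
    closedBall_subset_of_forall_exists_dist_le (convex_convexHull ℝ S) hPc.isClosed hδ.le
      fun x hx => hKP x (hρK hx)
  refine ⟨P, ⟨hPc, convex_convexHull ℝ S, by rw [← convexHull_neg, hSneg], ?_⟩,
    ⟨hSfin.toFinset, by simp [P]⟩, ?_, fun a ha b hab => ?_⟩
  · exact mem_interior_iff_mem_nhds.2 <|
      Filter.mem_of_superset (closedBall_mem_nhds 0 (by linarith)) hballP
  · refine (hausdorffDist_le_of_mem_dist (by positivity : 0 ≤ μ / 2) (fun x hx => ?_)
      fun p hp => ⟨p, hKB (hPK hp), by rw [dist_self]; positivity⟩).trans_lt (by linarith)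
    obtain ⟨y, hyK, hxy⟩ := hBK x hx
    obtain ⟨p, hpP, hyp⟩ := hKP y hyK
    exact ⟨p, hpP, (dist_triangle x y p).trans (by linarith)⟩
  · calc diam {x ∈ P | ⟪a, x⟫ = b} ≤ √(δ / c) :=
          hK.diam_inter_supportingHyperplane_le hc hPK hKP ha hab
      _ < μ := by rw [Real.sqrt_lt' hμ, div_lt_iff₀ hc]; linarith

/-- Every `B ∈ 𝓑_d` can be approximated, within Hausdorff distance `< μ`, by a
bounded `0`-symmetric polytope `B' ∈ 𝓑_d` (a convex hull of finitely many points)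
all of whose supporting-hyperplane sections (in particular, all of whose facets)
have Euclidean diameter `< μ`. -/
theorem thm_approximating_polytope_small_facets (d : ℕ) (hd : 1 ≤ d)
    (B : Set (EuclideanSpace ℝ (Fin d))) (hB : IsUnitBall B) (μ : ℝ) (hμ : 0 < μ) :
    ∃ B' : Set (EuclideanSpace ℝ (Fin d)), IsUnitBall B' ∧
      (∃ S : Finset (EuclideanSpace ℝ (Fin d)),
        B' = convexHull ℝ (S : Set (EuclideanSpace ℝ (Fin d)))) ∧
      Metric.hausdorffDist B B' < μ ∧
      ∀ a : EuclideanSpace ℝ (Fin d), a ≠ 0 → ∀ b : ℝ,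
        (∀ x ∈ B', (inner ℝ a x : ℝ) ≤ b) →
        Metric.diam {x ∈ B' | (inner ℝ a x : ℝ) = b} < μ :=
  thm_approximating_polytope_small_facets_general d B hB μ hμ
end

section
/- Let d ≥ 1 be an integer, let δ > 0, and let B, B' ∈ 𝓑_d satisfy d_H(B, B') ≤ δ. Then for every point x in the topological boundary (frontier) of B there exists a point y in the topological boundary of B' with ‖x − y‖₂ ≤ δ. -/
open Metric Set

open scoped RealInnerProductSpace

theorem IsPreconnected.inter_frontier_nonempty {X : Type*} [TopologicalSpace X]
    {c s : Set X} (hc : IsPreconnected c) (hcs : (c ∩ s).Nonempty)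
    (hc_int : ¬c ⊆ interior s) : (c ∩ frontier s).Nonempty := by
  by_contra h
  have hcover : c ⊆ interior s ∪ (closure s)ᶜ := fun y hy ↦ by
    by_cases hyi : y ∈ interior s
    · exact .inl hyi
    · exact .inr fun hyc ↦ h ⟨y, hy, hyc, hyi⟩
  have hdisj : Disjoint (interior s) (closure s)ᶜ :=
    disjoint_compl_right.mono_left interior_subset_closure
  rcases hc.subset_or_subset isOpen_interior isClosed_closure.isOpen_compl hdisj hcover
    with hint | hext
  · exact hc_int hint
  · obtain ⟨y, hyc, hys⟩ := hcs
    exact hext hyc (subset_closure hys)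

section InnerProductSpace

variable {E : Type*} [NormedAddCommGroup E] [InnerProductSpace ℝ E]

theorem Convex.exists_unit_inner_le_of_notMem_interior [CompleteSpace E] {s : Set E} {x : E}
    (hs : Convex ℝ s) (hs_int : (interior s).Nonempty) (hx : x ∉ interior s) :
    ∃ u : E, ‖u‖ = 1 ∧ ∀ b ∈ s, ⟪u, b⟫ ≤ ⟪u, x⟫ := by
  obtain ⟨f, hf0, hf⟩ := geometric_hahn_banach_of_nonempty_interior_point hs hx hs_int
  set v := (InnerProductSpace.toDual ℝ E).symm f
  have hv : ∀ w, ⟪v, w⟫ = f w := fun _ ↦ InnerProductSpace.toDual_symm_apply (𝕜 := ℝ) (E := E)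
  have hv0 : ‖v‖ ≠ 0 := by simpa [v] using hf0
  refine ⟨‖v‖⁻¹ • v, by rw [norm_smul, norm_inv, norm_norm, inv_mul_cancel₀ hv0], ?_⟩
  intro b hb
  simp only [real_inner_smul_left, hv]
  exact mul_le_mul_of_nonneg_left (hf b hb) (by positivity)

theorem le_infDist_add_smul {s : Set E} {x u : E} (hs : s.Nonempty) (hu : ‖u‖ = 1)
    (hsupp : ∀ b ∈ s, ⟪u, b⟫ ≤ ⟪u, x⟫) (t : ℝ) : t ≤ infDist (x + t • u) s := by
  refine (le_infDist hs).2 fun b hb ↦ ?_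
  calc t ≤ ⟪u, x - b⟫ + t := by linarith [inner_sub_right (𝕜 := ℝ) u x b, hsupp b hb]
    _ = ⟪u, x + t • u - b⟫ := by
      rw [add_sub_right_comm, inner_add_right, real_inner_smul_right,
        real_inner_self_eq_norm_sq, hu]
      ring
    _ ≤ ‖u‖ * ‖x + t • u - b‖ := real_inner_le_norm _ _
    _ = dist (x + t • u) b := by rw [hu, one_mul, dist_eq_norm]

theorem add_smul_notMem_interior {s t : Set E} {x u : E} {δ : ℝ} (hs : s.Nonempty)
    (hu : ‖u‖ = 1) (hsupp : ∀ b ∈ s, ⟪u, b⟫ ≤ ⟪u, x⟫) (ht : ∀ w ∈ t, infDist w s ≤ δ) :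
    x + δ • u ∉ interior t := by
  intro hint
  obtain ⟨ε, hε, hball⟩ := Metric.isOpen_iff.1 isOpen_interior _ hint
  have hmem : x + (δ + ε / 2) • u ∈ t := by
    refine interior_subset (hball ?_)
    rw [mem_ball, dist_eq_norm, add_smul, ← add_assoc, add_sub_cancel_left, norm_smul, hu,
      mul_one, Real.norm_of_nonneg (by positivity)]
    linarith
  linarith [ht _ hmem, le_infDist_add_smul hs hu hsupp (δ + ε / 2)]

end InnerProductSpace

theorem thm_hausdorff_distance_boundary_general (d : ℕ) (δ : ℝ)
    (B B' : Set (EuclideanSpace ℝ (Fin d))) (hB : IsUnitBall B) (hB' : IsUnitBall B')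
    (hdist : Metric.hausdorffDist B B' ≤ δ) :
    ∀ x ∈ frontier B, ∃ y ∈ frontier B', ‖x - y‖ ≤ δ := by
  obtain ⟨hBc, hBconv, -, hB0⟩ := hB
  obtain ⟨hB'c, -, -, hB'0⟩ := hB'
  have hBne : B.Nonempty := ⟨0, interior_subset hB0⟩
  have hB'ne : B'.Nonempty := ⟨0, interior_subset hB'0⟩
  have hfin : hausdorffEDist B B' ≠ ⊤ :=
    hausdorffEDist_ne_top_of_nonempty_of_bounded hBne hB'ne hBc.isBounded hB'c.isBounded
  have hB'_near : ∀ w ∈ B', infDist w B ≤ δ := fun w hw ↦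
    (infDist_le_hausdorffDist_of_mem hw (by rwa [hausdorffEDist_comm])).trans
      (by rwa [hausdorffDist_comm])
  intro x hx
  obtain ⟨u, hu, hsupp⟩ := hBconv.exists_unit_inner_le_of_notMem_interior ⟨0, hB0⟩ hx.2
  obtain ⟨y, hyB', hy⟩ := hB'c.exists_infDist_eq_dist hB'ne x
  have hy_ball : y ∈ closedBall x δ := by
    rw [mem_closedBall, dist_comm, ← hy]
    exact (infDist_le_hausdorffDist_of_mem (hBc.isClosed.frontier_subset hx) hfin).trans hdist
  have hp_ball : x + δ • u ∈ closedBall x δ := by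
    rw [mem_closedBall, dist_eq_norm, add_sub_cancel_left, norm_smul, hu, mul_one,
      Real.norm_of_nonneg (hausdorffDist_nonneg.trans hdist)]
  obtain ⟨z, hz, hzB'⟩ := (convex_closedBall x δ).isPreconnected.inter_frontier_nonempty
    ⟨y, hy_ball, hyB'⟩ fun hsub ↦ add_smul_notMem_interior hBne hu hsupp hB'_near (hsub hp_ball)
  exact ⟨z, hzB', by rwa [mem_closedBall, dist_comm, dist_eq_norm] at hz⟩

/-- If `B, B' ∈ 𝓑_d` are at Hausdorff distance at most `δ`, then every boundary
point of `B` is within Euclidean distance `δ` of some boundary point of `B'`. -/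
theorem thm_hausdorff_distance_boundary (d : ℕ) (hd : 1 ≤ d) (δ : ℝ) (hδ : 0 < δ)
    (B B' : Set (EuclideanSpace ℝ (Fin d))) (hB : IsUnitBall B) (hB' : IsUnitBall B')
    (hdist : Metric.hausdorffDist B B' ≤ δ) :
    ∀ x ∈ frontier B, ∃ y ∈ frontier B', ‖x - y‖ ≤ δ :=
  thm_hausdorff_distance_boundary_general d δ B B' hB hB' hdist
end

section
/- Let F be a field and V a vector space over F. Let u₁, …, u_k ∈ V be linearly independent vectors and let p₁, …, pₙ ∈ V be distinct vectors (n ≥ 1). Let G be a simple graph on vertex set {1, …, n} such that (i) for every edge xy of G there is some i ∈ {1, …, k} with p_x − p_y ∈ span_F(u_i), and (ii) for each i ∈ {1, …, k}, the subgraph of G consisting of all edges xy with p_x − p_y ∈ span_F(u_i) contains no cycle. Then G has at most (1/2)·n·log₂ n edges. -/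
/-!
For a subspace `W` let `S(W) = ∑ₓ log |{y | p y ≡ p x mod W}|`. If `W₁ ⊓ W₂ = ⊥`, a class mod `W₁`
and a class mod `W₂` meet in at most one point, and Gibbs' inequality `log t ≤ t - 1` gives the
submodularity `S(W₁) + S(W₂) ≤ S(W₁ ⊔ W₂)`. For the independent lines `span {uᵢ}` this yields
`∑ᵢ S(span {uᵢ}) ≤ n log n`. The `i`-th forest has its edges inside the classes mod `span {uᵢ}`,
so it has at most `n - #classes = ∑ₓ (1 - 1 / |class x|) ≤ ∑ₓ log₂ |class x| / 2` edges.
-/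

open Finset
open scoped Classical

noncomputable section

section FiberCard

variable {α β γ δ : Type*} [Fintype α]

def fiberCard (f : α → β) (x : α) : ℕ := #{y | f y = f x}

lemma fiberCard_pos (f : α → β) (x : α) : 0 < fiberCard f x :=
  card_pos.2 ⟨x, by simp⟩

lemma fiberCard_le_card (f : α → β) (x : α) : fiberCard f x ≤ Fintype.card α :=
  card_filter_le _ _

lemma fiberCard_congr (f : α → β) {x y : α} (h : f x = f y) : fiberCard f x = fiberCard f y := by
  simp only [fiberCard, h]

lemma sum_fiberCard_mul_div_le (f : α → β) (g : α → γ) (h : α → δ)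
    (hfg : ∀ x y, f x = f y → g x = g y) (hhg : ∀ x y, h x = h y → g x = g y)
    (hfh : ∀ x y, f x = f y → h x = h y → x = y) :
    ∑ x, (fiberCard f x * fiberCard h x : ℝ) / fiberCard g x ≤ Fintype.card α := by
  -- the term of `x` spreads over the pairs in `S x`, and a pair lies in `S x` for at most one `x`
  let S : α → Finset (α × α) := fun x =>
    ({y | f y = f x} : Finset α) ×ˢ ({z | h z = h x} : Finset α)
  let w : α × α → ℝ := fun q => (fiberCard g q.1 : ℝ)⁻¹
  have hterm : ∀ x, (fiberCard f x * fiberCard h x : ℝ) / fiberCard g x = ∑ q ∈ S x, w q := by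
    intro x
    have hw : ∀ q ∈ S x, w q = (fiberCard g x : ℝ)⁻¹ := fun q hq => by
      simp only [S, mem_product, mem_filter, mem_univ, true_and] at hq
      simp only [w, fiberCard_congr g (hfg _ _ hq.1)]
    rw [sum_congr rfl hw, sum_const, card_product, nsmul_eq_mul, div_eq_mul_inv]
    simp [fiberCard]
  have hdisj : (↑(univ : Finset α) : Set α).PairwiseDisjoint S := by
    intro x _ x' _ hne
    refine disjoint_left.2 fun q hq hq' => hne ?_
    simp only [S, mem_product, mem_filter, mem_univ, true_and] at hq hq'
    exact hfh x x' (hq.1.symm.trans hq'.1) (hq.2.symm.trans hq'.2)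
  have hsub : univ.biUnion S ⊆ ({q | g q.2 = g q.1} : Finset (α × α)) := by
    intro q hq
    simp only [S, mem_biUnion, mem_product, mem_filter, mem_univ, true_and] at hq ⊢
    obtain ⟨x, hy, hz⟩ := hq
    exact (hhg _ _ hz).trans (hfg _ _ hy).symm
  calc ∑ x, (fiberCard f x * fiberCard h x : ℝ) / fiberCard g x
      = ∑ q ∈ univ.biUnion S, w q := by
        rw [sum_biUnion hdisj]; exact sum_congr rfl fun x _ => hterm x
    _ ≤ ∑ q ∈ ({q | g q.2 = g q.1} : Finset (α × α)), w q :=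
        sum_le_sum_of_subset_of_nonneg hsub fun q _ _ => by positivity
    _ = ∑ y : α, (fiberCard g y : ℝ) * (fiberCard g y : ℝ)⁻¹ := by
        rw [sum_filter, Fintype.sum_prod_type]
        refine sum_congr rfl fun y _ => ?_
        rw [← sum_filter]
        simp only [w, sum_const, nsmul_eq_mul]
        rfl
    _ = Fintype.card α := by
        simp [mul_inv_cancel₀ (Nat.cast_ne_zero (R := ℝ) |>.2 (fiberCard_pos g _).ne')]

def sumLogFiberCard (f : α → β) : ℝ := ∑ x, Real.log (fiberCard f x)

lemma sumLogFiberCard_nonneg (f : α → β) : 0 ≤ sumLogFiberCard f :=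
  sum_nonneg fun x _ => Real.log_nonneg (by exact_mod_cast fiberCard_pos f x)

lemma sumLogFiberCard_le (f : α → β) :
    sumLogFiberCard f ≤ Fintype.card α * Real.log (Fintype.card α) := by
  calc sumLogFiberCard f ≤ ∑ _x : α, Real.log (Fintype.card α) :=
        sum_le_sum fun x _ => Real.log_le_log (by exact_mod_cast fiberCard_pos f x)
          (by exact_mod_cast fiberCard_le_card f x)
    _ = Fintype.card α * Real.log (Fintype.card α) := by simp

/-- Submodularity of entropy: with `α` carrying the uniform distribution, `sumLogFiberCard f`
is `|α| (log |α| - H(f))`, and the inequality says `H(f) + H(h) ≥ H(f, h) + H(g)`. -/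
lemma sumLogFiberCard_add_le (f : α → β) (g : α → γ) (h : α → δ)
    (hfg : ∀ x y, f x = f y → g x = g y) (hhg : ∀ x y, h x = h y → g x = g y)
    (hfh : ∀ x y, f x = f y → h x = h y → x = y) :
    sumLogFiberCard f + sumLogFiberCard h ≤ sumLogFiberCard g := by
  have hpoint : ∀ x, Real.log (fiberCard f x) + Real.log (fiberCard h x) - Real.log (fiberCard g x)
      ≤ (fiberCard f x * fiberCard h x : ℝ) / fiberCard g x - 1 := fun x => by
    have ha : (0 : ℝ) < fiberCard f x := by exact_mod_cast fiberCard_pos f x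
    have hb : (0 : ℝ) < fiberCard h x := by exact_mod_cast fiberCard_pos h x
    have hc : (0 : ℝ) < fiberCard g x := by exact_mod_cast fiberCard_pos g x
    rw [← Real.log_mul ha.ne' hb.ne', ← Real.log_div (by positivity) hc.ne']
    exact Real.log_le_sub_one_of_pos (by positivity)
  have := sum_le_sum fun x (_ : x ∈ univ) => hpoint x
  simp only [sum_sub_distrib, sum_add_distrib, sum_const, card_univ, nsmul_one] at this
  unfold sumLogFiberCard
  linarith [sum_fiberCard_mul_div_le f g h hfg hhg hfh]

lemma sum_inv_fiberCard (f : α → β) : ∑ x, (fiberCard f x : ℝ)⁻¹ = Nat.card (Set.range f) := by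
  rw [Nat.card_eq_card_toFinset, Set.toFinset_range,
    ← sum_fiberwise_of_maps_to (fun x _ => mem_image_of_mem f (mem_univ x)), card_eq_sum_ones,
    Nat.cast_sum]
  refine sum_congr rfl fun b hb => ?_
  obtain ⟨x, -, rfl⟩ := mem_image.1 hb
  rw [sum_congr rfl fun y hy => by rw [fiberCard_congr f (mem_filter.1 hy).2], sum_const,
    nsmul_eq_mul, Nat.cast_one]
  exact mul_inv_cancel₀ (Nat.cast_ne_zero (R := ℝ) |>.2 (fiberCard_pos f x).ne')

end FiberCard

lemma two_mul_log_two_mul_one_sub_inv_le_log {s : ℕ} (hs : 1 ≤ s) :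
    2 * Real.log 2 * (1 - (s : ℝ)⁻¹) ≤ Real.log s := by
  have hlog2 : 0 < Real.log 2 := Real.log_pos one_lt_two
  rcases lt_or_ge s 4 with hs4 | hs4
  · interval_cases s
    · simp
    · norm_num
      linarith
    · have : Real.log (2 ^ 4) ≤ Real.log (3 ^ 3) := Real.log_le_log (by norm_num) (by norm_num)
      rw [Real.log_pow, Real.log_pow] at this
      norm_num at this ⊢
      linarith
  · have h4 : 2 * Real.log 2 ≤ Real.log s := by
      rw [← Real.log_rpow two_pos]
      exact Real.log_le_log (by positivity) (by norm_num; exact_mod_cast hs4)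
    have : 0 ≤ (s : ℝ)⁻¹ := by positivity
    nlinarith

namespace SimpleGraph

variable {V β : Type*} {G : SimpleGraph V}

lemma Reachable.eq_of_forall_adj {f : V → β} (hf : ∀ x y, G.Adj x y → f x = f y) {x y : V}
    (h : G.Reachable x y) : f x = f y := by
  obtain ⟨w⟩ := h
  induction w with
  | nil => rfl
  | cons hadj _ ih => exact (hf _ _ hadj).trans ih

lemma card_range_le_card_connectedComponent [Finite V] {f : V → β}
    (hf : ∀ x y, G.Adj x y → f x = f y) :
    Nat.card (Set.range f) ≤ Nat.card G.ConnectedComponent := by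
  have : Set.range f = Set.range
      (ConnectedComponent.lift f fun _ _ p _ => p.reachable.eq_of_forall_adj hf) := by
    ext b
    simp [ConnectedComponent.exists]
  rw [this]
  exact Finite.card_range_le _

/-- Deleting an edge of a forest splits a component in two. -/
lemma IsAcyclic.ncard_edgeSet_add_card_connectedComponent_le [Finite V]
    (hG : G.IsAcyclic) : G.edgeSet.ncard + Nat.card G.ConnectedComponent ≤ Nat.card V := by
  induction hm : G.edgeSet.ncard generalizing G with
  | zero => simpa using Nat.card_le_card_of_surjective _ fun c => c.exists_rep
  | succ m ih =>
    obtain ⟨e, he⟩ := Set.nonempty_of_ncard_ne_zero (s := G.edgeSet) (by omega)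
    induction e using Sym2.ind with | _ x y =>
    let G' := G.deleteEdges {s(x, y)}
    have hle : G' ≤ G := deleteEdges_le _
    have hm' : G'.edgeSet.ncard = m := by
      rw [edgeSet_deleteEdges, Set.ncard_sdiff_singleton_of_mem he, hm, Nat.add_sub_cancel]
    have hbridge : ¬ G'.Reachable x y :=
      isBridge_iff.1 (isAcyclic_iff_forall_adj_isBridge.1 hG he)
    have hmore : Nat.card G.ConnectedComponent < Nat.card G'.ConnectedComponent := by
      have := Fintype.ofFinite V
      simp only [Nat.card_eq_fintype_card]
      refine Fintype.card_lt_of_surjective_not_injective _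
        (ConnectedComponent.surjective_map_ofLE hle) fun hinj => hbridge ?_
      exact ConnectedComponent.exact (hinj (ConnectedComponent.sound he.reachable))
    have := ih (hG.anti hle) hm'
    omega

lemma IsAcyclic.two_mul_log_two_mul_ncard_edgeSet_le [Fintype V] (hG : G.IsAcyclic)
    {f : V → β} (hf : ∀ x y, G.Adj x y → f x = f y) :
    2 * Real.log 2 * G.edgeSet.ncard ≤ sumLogFiberCard f := by
  have hcount : G.edgeSet.ncard + Nat.card (Set.range f) ≤ Fintype.card V := by
    have := hG.ncard_edgeSet_add_card_connectedComponent_le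
    have := card_range_le_card_connectedComponent hf
    rw [← Nat.card_eq_fintype_card]
    omega
  calc 2 * Real.log 2 * G.edgeSet.ncard
      ≤ 2 * Real.log 2 * ∑ x, (1 - (fiberCard f x : ℝ)⁻¹) := by
        rw [sum_sub_distrib, sum_inv_fiberCard]
        gcongr
        simp only [sum_const, card_univ, nsmul_one]
        rw [le_sub_iff_add_le]
        exact_mod_cast hcount
    _ ≤ sumLogFiberCard f := by
        rw [mul_sum]
        exact sum_le_sum fun x _ => two_mul_log_two_mul_one_sub_inv_le_log (fiberCard_pos f x)

end SimpleGraph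

section Quotient

variable {α R V : Type*} [Fintype α] [Ring R] [AddCommGroup V] [Module R V] {p : α → V}

lemma sumLogFiberCard_mkQ_add_le (hp : Function.Injective p) {W₁ W₂ : Submodule R V}
    (h : Disjoint W₁ W₂) :
    sumLogFiberCard (W₁.mkQ ∘ p) + sumLogFiberCard (W₂.mkQ ∘ p)
      ≤ sumLogFiberCard ((W₁ ⊔ W₂).mkQ ∘ p) := by
  refine sumLogFiberCard_add_le _ _ _ ?_ ?_ ?_ <;>
    simp only [Function.comp_apply, Submodule.mkQ_apply, Submodule.Quotient.eq]
  · exact fun x y hxy => Submodule.mem_sup_left hxy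
  · exact fun x y hxy => Submodule.mem_sup_right hxy
  · exact fun x y h₁ h₂ => hp (sub_eq_zero.1 (Submodule.disjoint_def.1 h _ h₁ h₂))

lemma sum_sumLogFiberCard_mkQ_le (hp : Function.Injective p) {ι : Type*}
    {W : ι → Submodule R V} (hW : iSupIndep W) (s : Finset ι) :
    ∑ i ∈ s, sumLogFiberCard ((W i).mkQ ∘ p) ≤ sumLogFiberCard ((⨆ i ∈ s, W i).mkQ ∘ p) := by
  induction s using Finset.induction_on with
  | empty => simpa using sumLogFiberCard_nonneg _
  | insert a s ha ih =>
    have hdisj : Disjoint (W a) (⨆ i ∈ s, W i) := hW.disjoint_biSup ha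
    rw [sum_insert ha, Finset.iSup_insert]
    exact (add_le_add le_rfl ih).trans (sumLogFiberCard_mkQ_add_le hp hdisj)

end Quotient

end

theorem thm_point_sets_lin_independent_general (F : Type*) [Field F]
    (V : Type*) [AddCommGroup V] [Module F V]
    (k n : ℕ) (u : Fin k → V) (hu : LinearIndependent F u)
    (p : Fin n → V) (hp : Function.Injective p)
    (G : SimpleGraph (Fin n))
    (h1 : ∀ x y : Fin n, G.Adj x y →
      ∃ i : Fin k, p x - p y ∈ Submodule.span F ({u i} : Set V))
    (h2 : ∀ i : Fin k,
      (SimpleGraph.fromRel (fun x y =>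
        G.Adj x y ∧ p x - p y ∈ Submodule.span F ({u i} : Set V))).IsAcyclic) :
    (Set.ncard G.edgeSet : ℝ) ≤ 1 / 2 * n * Real.logb 2 n := by
  let W : Fin k → Submodule F V := fun i => Submodule.span F {u i}
  let H : Fin k → SimpleGraph (Fin n) := fun i =>
    SimpleGraph.fromRel fun x y => G.Adj x y ∧ p x - p y ∈ W i
  have hcover : G.edgeSet ⊆ ⋃ i, (H i).edgeSet := by
    intro e he
    induction e using Sym2.ind with | _ x y =>
    obtain ⟨i, hi⟩ := h1 x y he
    refine Set.mem_iUnion.2 ⟨i, ?_⟩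
    rw [SimpleGraph.mem_edgeSet, SimpleGraph.fromRel_adj]
    exact ⟨G.ne_of_adj he, .inl ⟨he, hi⟩⟩
  have hforest : ∀ i, 2 * Real.log 2 * (H i).edgeSet.ncard ≤ sumLogFiberCard ((W i).mkQ ∘ p) :=
    fun i => (h2 i).two_mul_log_two_mul_ncard_edgeSet_le fun x y hxy => by
      rw [SimpleGraph.fromRel_adj] at hxy
      simp only [Function.comp_apply, Submodule.mkQ_apply, Submodule.Quotient.eq]
      rcases hxy.2 with ⟨-, h⟩ | ⟨-, h⟩
      exacts [h, sub_mem_comm_iff.1 h]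
  have hedges : 2 * Real.log 2 * G.edgeSet.ncard ≤ n * Real.log n := calc
    2 * Real.log 2 * G.edgeSet.ncard ≤ ∑ i, 2 * Real.log 2 * (H i).edgeSet.ncard := by
      rw [← mul_sum]
      gcongr
      exact_mod_cast (Set.ncard_le_ncard hcover).trans (Set.ncard_iUnion_le_of_fintype _)
    _ ≤ ∑ i, sumLogFiberCard ((W i).mkQ ∘ p) := sum_le_sum fun i _ => hforest i
    _ ≤ sumLogFiberCard ((⨆ i ∈ univ, W i).mkQ ∘ p) :=
      sum_sumLogFiberCard_mkQ_le hp hu.iSupIndep_span_singleton univ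
    _ ≤ n * Real.log n := (sumLogFiberCard_le _).trans_eq (by simp)
  rw [Real.logb, show 1 / 2 * (n : ℝ) * (Real.log n / Real.log 2)
    = n * Real.log n / (2 * Real.log 2) by ring, le_div_iff₀ (by positivity)]
  linarith

/-- If `u₁, …, u_k` are linearly independent over `F`, `p₁, …, pₙ` are distinct, and
`G` is a graph on `{1, …, n}` whose every edge `xy` satisfies `p x - p y ∈ span_F(uᵢ)`
for some `i`, and for each `i` the subgraph of edges with `p x - p y ∈ span_F(uᵢ)` is a
forest, then `G` has at most `(1/2)·n·log₂ n` edges. -/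
theorem thm_point_sets_lin_independent (F : Type*) [Field F]
    (V : Type*) [AddCommGroup V] [Module F V]
    (k n : ℕ) (hn : 1 ≤ n) (u : Fin k → V) (hu : LinearIndependent F u)
    (p : Fin n → V) (hp : Function.Injective p)
    (G : SimpleGraph (Fin n))
    (h1 : ∀ x y : Fin n, G.Adj x y →
      ∃ i : Fin k, p x - p y ∈ Submodule.span F ({u i} : Set V))
    (h2 : ∀ i : Fin k,
      (SimpleGraph.fromRel (fun x y =>
        G.Adj x y ∧ p x - p y ∈ Submodule.span F ({u i} : Set V))).IsAcyclic) :
    (Set.ncard G.edgeSet : ℝ) ≤ 1 / 2 * n * Real.logb 2 n :=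
  thm_point_sets_lin_independent_general F V k n u hu p hp G h1 h2
end

section
/- For any integer ℓ ≥ 1 and any positive integers n₁ ≥ n₂ ≥ … ≥ n_ℓ ≥ 1 with n = n₁ + … + n_ℓ, one has the real inequality n₁ − (1/2)·Σ_{i=1}^{ℓ} n_i·log₂ n_i ≥ n − (1/2)·n·log₂ n. -/
/-!
With `f x = x log₂ x`, one has `f (a + b) - f a - f b ≥ 2b` whenever `0 ≤ b ≤ a`: the term
`b log₂ ((a + b) / b)` is at least `b` because `(a + b) / b ≥ 2`, and `a log₂ (1 + b / a)` is at
least `b` because `log₂ (1 + t) ≥ t` on `[0, 1]` (Bernoulli: `2 ^ t ≤ 1 + t`). Adding the parts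
in decreasing order, each new part `b` is at most the sum `a` of the previous ones, so
`Σ aᵢ - ½ f (Σ aᵢ)` changes by at most `b - ½ (f b + 2b) = -½ f b`, which is exactly the change
of `a₁ - ½ Σ f aᵢ`.
-/

open Real Finset

lemma le_logb_two_one_add {t : ℝ} (h0 : 0 ≤ t) (h1 : t ≤ 1) : t ≤ logb 2 (1 + t) := by
  rw [le_logb_iff_rpow_le one_lt_two (by linarith)]
  simpa [one_add_one_eq_two] using rpow_one_add_le_one_add_mul_self (s := 1) (by norm_num) h0 h1

lemma mul_logb_two_add_mul_logb_two_add_two_mul_le {a b : ℝ} (hb : 0 ≤ b) (hab : b ≤ a) :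
    a * logb 2 a + b * logb 2 b + 2 * b ≤ (a + b) * logb 2 (a + b) := by
  rcases hb.eq_or_lt with rfl | hb
  · simp
  have ha : 0 < a := hb.trans_le hab
  have h_large : b ≤ a * (logb 2 (a + b) - logb 2 a) := by
    have h : b / a ≤ logb 2 (1 + b / a) :=
      le_logb_two_one_add (by positivity) ((div_le_one ha).2 hab)
    rw [← logb_div (by positivity) ha.ne', add_div, div_self ha.ne']
    rwa [div_le_iff₀' ha] at h
  have h_small : b ≤ b * (logb 2 (a + b) - logb 2 b) := by
    have h : 1 ≤ logb 2 ((a + b) / b) := by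
      rw [le_logb_iff_rpow_le one_lt_two (by positivity), rpow_one, le_div_iff₀ hb]
      linarith
    rw [← logb_div (by positivity) hb.ne']
    nlinarith
  linear_combination h_large + h_small

theorem sum_sub_half_mul_logb_two_le {k : ℕ} (a : Fin (k + 1) → ℝ) (hmono : Antitone a)
    (hnonneg : ∀ i, 0 ≤ a i) :
    (∑ i, a i) - 1 / 2 * (∑ i, a i) * logb 2 (∑ i, a i) ≤
      a 0 - 1 / 2 * ∑ i, a i * logb 2 (a i) := by
  induction k with
  | zero => simp; linarith
  | succ k ih =>
    have ih' := ih (fun i => a i.castSucc)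
      (hmono.comp_monotone Fin.strictMono_castSucc.monotone) fun i => hnonneg _
    simp only [Fin.castSucc_zero] at ih'
    have hlast : a (Fin.last (k + 1)) ≤ ∑ i : Fin (k + 1), a i.castSucc :=
      calc a (Fin.last (k + 1)) ≤ a (Fin.castSucc 0) := hmono (Fin.le_last _)
        _ ≤ ∑ i : Fin (k + 1), a i.castSucc :=
          single_le_sum (f := fun i : Fin (k + 1) => a i.castSucc) (fun i _ => hnonneg _)
            (mem_univ 0)
    have hstep := mul_logb_two_add_mul_logb_two_add_two_mul_le (hnonneg (Fin.last (k + 1))) hlast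
    rw [Fin.sum_univ_castSucc, Fin.sum_univ_castSucc (fun i : Fin (k + 2) => a i * logb 2 (a i))]
    linarith

theorem thm_entropy_like_inequality_general (ℓ : ℕ) (hℓ : 1 ≤ ℓ) (a : Fin ℓ → ℕ)
    (hmono : Antitone a) (n : ℕ) (hn : n = ∑ i, a i) :
    (n : ℝ) - 1 / 2 * n * Real.logb 2 n ≤
      (a ⟨0, hℓ⟩ : ℝ) - 1 / 2 * ∑ i, (a i : ℝ) * Real.logb 2 (a i) := by
  obtain ⟨k, rfl⟩ : ∃ k, ℓ = k + 1 := ⟨ℓ - 1, by omega⟩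
  subst hn
  push_cast
  exact sum_sub_half_mul_logb_two_le (fun i => (a i : ℝ)) (Nat.mono_cast.comp_antitone hmono)
    fun i => Nat.cast_nonneg _

/-- Entropy-like inequality: for positive integers `n₁ ≥ n₂ ≥ … ≥ n_ℓ ≥ 1` summing
to `n`, one has `n₁ - (1/2)·Σᵢ nᵢ·log₂ nᵢ ≥ n - (1/2)·n·log₂ n`. -/
theorem thm_entropy_like_inequality (ℓ : ℕ) (hℓ : 1 ≤ ℓ) (a : Fin ℓ → ℕ)
    (hmono : Antitone a) (hpos : ∀ i, 1 ≤ a i) (n : ℕ) (hn : n = ∑ i, a i) :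
    (n : ℝ) - 1 / 2 * n * Real.logb 2 n ≤
      (a ⟨0, hℓ⟩ : ℝ) - 1 / 2 * ∑ i, (a i : ℝ) * Real.logb 2 (a i) :=
  thm_entropy_like_inequality_general ℓ hℓ a hmono n hn
end

section
/- Let V be a vector space over a field F and let u₁, …, u_k ∈ V be nonzero vectors. Let d ≥ 1 and m ≥ 0 be integers, and suppose that for every subset I ⊆ {1, …, k}, the number of indices ℓ ∈ {1, …, k} with u_ℓ ∈ span_F(u_i : i ∈ I) is at most d·|I| + m. Let M > 0 be a real number and let λ₁, …, λ_k be real numbers in [0, M]. Then there exists a subset J ⊆ {1, …, k} such that the family (u_j)_{j∈J} is linearly independent over F and Σ_{j∈J} λ_j ≥ (λ₁ + … + λ_k − m·M)/d. -/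
/-!
Process the indices in order of decreasing weight and keep an index whenever its vector is not
in the span of the vectors kept so far. The kept family `J` is linearly independent and, at every
stage, spans everything processed, so the hypothesis bounds the number `n` of processed indices by
`d · |J| + m`. Writing `c` for the weight of the next index, the potential
`∑_{processed} λ + (d · |J| + m - n) · c` never exceeds `d · ∑_J λ + m · M`: it starts at
`m · c ≤ m · M`, and since weights only decrease and the coefficient of `c` stays nonnegative,
each step moves it in the right direction. At the end (with `c = 0`) this is the claim.
-/

section Greedy

open Finset Submodule

variable {ι : Type*}

section Invariant

variable (w : ι → ℝ) (d m : ℕ) (M : ℝ)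

def GreedyInvariant (S J : Finset ι) : Prop :=
  ∀ c ∈ Set.Icc 0 M, (∀ i ∈ S, c ≤ w i) →
    ∑ i ∈ S, w i + (d * #J + m - #S : ℝ) * c ≤ d * ∑ j ∈ J, w j + m * M

variable {w d m M}

theorem greedyInvariant_empty : GreedyInvariant w d m M ∅ ∅ := by
  intro c hc _
  simpa using mul_le_mul_of_nonneg_left hc.2 m.cast_nonneg

variable [DecidableEq ι] {S J : Finset ι} {a : ι}

theorem GreedyInvariant.insert_left (h : GreedyInvariant w d m M S J) (ha : a ∉ S)
    (hwa : w a ∈ Set.Icc 0 M) (hmin : ∀ i ∈ S, w a ≤ w i) (hcard : #S + 1 ≤ d * #J + m) :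
    GreedyInvariant w d m M (insert a S) J := by
  intro c hc hcS
  have hca : c ≤ w a := hcS a (mem_insert_self a S)
  have hprev := h (w a) hwa hmin
  have hcoef : (0 : ℝ) ≤ d * #J + m - #S - 1 := by
    have : ((#S + 1 : ℕ) : ℝ) ≤ (d * #J + m : ℕ) := by exact_mod_cast hcard
    push_cast at this
    linarith
  rw [sum_insert ha, card_insert_of_notMem ha]
  push_cast
  nlinarith [mul_le_mul_of_nonneg_left hca hcoef]

theorem GreedyInvariant.insert_insert (h : GreedyInvariant w d m M S J) (haS : a ∉ S)
    (haJ : a ∉ J) (hwa : w a ∈ Set.Icc 0 M) (hmin : ∀ i ∈ S, w a ≤ w i) (hd : 1 ≤ d)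
    (hcard : #S ≤ d * #J + m) :
    GreedyInvariant w d m M (insert a S) (insert a J) := by
  intro c hc hcS
  have hca : c ≤ w a := hcS a (mem_insert_self a S)
  have hprev := h (w a) hwa hmin
  have hcoef : (0 : ℝ) ≤ d * #J + m - #S + d - 1 := by
    have : (#S : ℝ) ≤ (d * #J + m : ℕ) := by exact_mod_cast hcard
    have : (1 : ℝ) ≤ d := by exact_mod_cast hd
    push_cast at *
    linarith
  rw [sum_insert haS, sum_insert haJ, card_insert_of_notMem haS, card_insert_of_notMem haJ]
  push_cast
  nlinarith [mul_le_mul_of_nonneg_left hca hcoef]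

end Invariant

theorem exists_linearIndepOn_greedyInvariant {F V : Type*} [Field F] [AddCommGroup V]
    [Module F V] [Finite ι] {u : ι → V} {d m : ℕ} (hd : 1 ≤ d)
    (hspan : ∀ I : Finset ι, {ℓ | u ℓ ∈ span F (u '' I)}.ncard ≤ d * #I + m)
    {M : ℝ} {w : ι → ℝ} (hw : ∀ i, w i ∈ Set.Icc 0 M) (S : Finset ι) :
    ∃ J : Finset ι, LinearIndepOn F u J ∧ u '' S ⊆ span F (u '' J) ∧
      GreedyInvariant w d m M S J := by
  classical
  induction S using induction_on_min_value w with
  | empty => exact ⟨∅, by simp, by simp, greedyInvariant_empty⟩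
  | insert a S haS hmin ih =>
    obtain ⟨J, hJ, hSJ, hinv⟩ := ih
    have hcard (T : Finset ι) (hT : u '' T ⊆ span F (u '' J)) : #T ≤ d * #J + m :=
      calc #T = (T : Set ι).ncard := (Set.ncard_coe_finset T).symm
        _ ≤ {ℓ | u ℓ ∈ span F (u '' J)}.ncard :=
          Set.ncard_le_ncard (fun i hi => hT ⟨i, hi, rfl⟩)
        _ ≤ d * #J + m := hspan J
    by_cases hmem : u a ∈ span F (u '' J)
    · have hspan' : u '' ↑(insert a S) ⊆ span F (u '' J) := by
        rw [coe_insert, Set.image_insert_eq]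
        exact Set.insert_subset hmem hSJ
      refine ⟨J, hJ, hspan', hinv.insert_left haS (hw a) hmin ?_⟩
      simpa [card_insert_of_notMem haS] using hcard _ hspan'
    · have haJ : a ∉ J := fun ha => hmem (subset_span ⟨a, ha, rfl⟩)
      refine ⟨insert a J, ?_, ?_, hinv.insert_insert haS haJ (hw a) hmin hd (hcard S hSJ)⟩
      · rw [coe_insert]
        exact (linearIndepOn_insert (by simpa using haJ)).2 ⟨hJ, hmem⟩
      · rw [coe_insert, coe_insert, Set.image_insert_eq, Set.image_insert_eq]
        refine Set.insert_subset (subset_span (Set.mem_insert _ _)) ?_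
        exact hSJ.trans (span_mono (Set.subset_insert _ _))

end Greedy

theorem thm_linear_algebra_greedy_general (F : Type*) [Field F]
    (V : Type*) [AddCommGroup V] [Module F V]
    (k : ℕ) (u : Fin k → V) (d m : ℕ) (hd : 1 ≤ d)
    (hspan : ∀ I : Finset (Fin k),
      Set.ncard {ℓ : Fin k | u ℓ ∈ Submodule.span F (u '' (I : Set (Fin k)))} ≤
        d * I.card + m)
    (M : ℝ) (hM : 0 < M) (lam : Fin k → ℝ) (hlam : ∀ i, lam i ∈ Set.Icc 0 M) :
    ∃ J : Finset (Fin k),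
      LinearIndependent F (fun j : J => u (j : Fin k)) ∧
        ((∑ i, lam i) - m * M) / d ≤ ∑ j ∈ J, lam j := by
  obtain ⟨J, hJ, -, hinv⟩ := exists_linearIndepOn_greedyInvariant hd hspan hlam Finset.univ
  refine ⟨J, hJ, ?_⟩
  have hbound := hinv 0 ⟨le_rfl, hM.le⟩ fun i _ => (hlam i).1
  rw [div_le_iff₀ (by exact_mod_cast hd)]
  simp only [mul_zero, add_zero] at hbound
  linarith

/-- Greedy linear-algebra lemma: if for every subset `I ⊆ {1, …, k}` at most
`d·|I| + m` of the nonzero vectors `u₁, …, u_k` lie in `span_F(uᵢ : i ∈ I)`, then for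
any weights `λᵢ ∈ [0, M]` there is a subset `J` with `(u_j)_{j ∈ J}` linearly
independent and `Σ_{j∈J} λ_j ≥ (λ₁ + … + λ_k - m·M)/d`. -/
theorem thm_linear_algebra_greedy (F : Type*) [Field F]
    (V : Type*) [AddCommGroup V] [Module F V]
    (k : ℕ) (u : Fin k → V) (hu : ∀ i, u i ≠ 0) (d m : ℕ) (hd : 1 ≤ d)
    (hspan : ∀ I : Finset (Fin k),
      Set.ncard {ℓ : Fin k | u ℓ ∈ Submodule.span F (u '' (I : Set (Fin k)))} ≤
        d * I.card + m)
    (M : ℝ) (hM : 0 < M) (lam : Fin k → ℝ) (hlam : ∀ i, lam i ∈ Set.Icc 0 M) :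
    ∃ J : Finset (Fin k),
      LinearIndependent F (fun j : J => u (j : Fin k)) ∧
        ((∑ i, lam i) - m * M) / d ≤ ∑ j ∈ J, lam j :=
  thm_linear_algebra_greedy_general F V k u d m hd hspan M hM lam hlam
end

section
/- Let d, ℓ, h ≥ 1 be integers, let o₁, …, o_h ∈ ℝ^d be fixed vectors, and let A = (a_{ji}) be a fixed (dℓ+1) × ℓ matrix with rational entries. Call a tuple (t₁, …, t_h) ∈ ℝ^h achievable if there exist an injective map φ : {1, …, dℓ+1} → {1, …, h} and vectors u₁, …, u_{dℓ+1} ∈ ℝ^d such that u_j = Σ_{i=1}^{ℓ} a_{ji}·u_i for all j ∈ {1, …, dℓ+1} and |⟨o_{φ(j)}, u_j⟩| = t_{φ(j)} for all j ∈ {1, …, dℓ+1}. Then there exists a finite set Φ of nonzero linear functionals on ℝ^h such that every achievable tuple lies in ⋃_{f ∈ Φ} ker f; that is, the set of achievable tuples is covered by finitely many (h−1)-dimensional linear hyperplanes in ℝ^h. -/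
/-!
Fix the injection `φ`. The tuple `(⟨o_{φ j}, u_j⟩)_j ∈ ℝ^{dℓ+1}` is the image of
`(u_1, …, u_ℓ) ∈ (ℝ^d)^ℓ` under a linear map, so it lies in a proper subspace, hence in the
kernel of some nonzero `c`: `∑ j, c_j ⟨o_{φ j}, u_j⟩ = 0`. Writing `⟨o_{φ j}, u_j⟩ = ε_j t_{φ j}`
with signs `ε_j = ±1`, the tuple `t` is killed by `t ↦ ∑ j, ε_j c_j t_{φ j}`, which is nonzero
because `φ` is injective. There are finitely many pairs `(φ, ε)`.
-/

open Finset Module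

namespace EuclideanSpace

variable {𝕜 ι κ : Type*} [RCLike 𝕜] [Fintype ι]

noncomputable def weightedSumAlong (φ : ι → κ) (w : ι → 𝕜) : EuclideanSpace 𝕜 κ →ₗ[𝕜] 𝕜 :=
  ∑ j, w j • projₗ (φ j)

theorem weightedSumAlong_apply (φ : ι → κ) (w : ι → 𝕜) (t : EuclideanSpace 𝕜 κ) :
    weightedSumAlong φ w t = ∑ j, w j * t (φ j) := by
  simp [weightedSumAlong]

theorem weightedSumAlong_ne_zero [DecidableEq κ] {φ : ι → κ} (hφ : Function.Injective φ)
    {w : ι → 𝕜} (hw : w ≠ 0) : weightedSumAlong φ w ≠ 0 := by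
  obtain ⟨j₀, hj₀⟩ := Function.ne_iff.mp hw
  intro h
  apply hj₀
  have := LinearMap.congr_fun h (EuclideanSpace.single (φ j₀) 1)
  rw [weightedSumAlong_apply, Finset.sum_eq_single j₀ (fun j _ hj => by
    simp [hφ.ne hj]) (by simp)] at this
  simpa using this

end EuclideanSpace

open EuclideanSpace

theorem LinearMap.exists_ne_zero_sum_mul_apply_eq_zero {K V ι : Type*} [Field K]
    [AddCommGroup V] [Module K V] [FiniteDimensional K V] [Fintype ι] [DecidableEq ι]
    (T : V →ₗ[K] ι → K) (hT : finrank K V < Fintype.card ι) :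
    ∃ c : ι → K, c ≠ 0 ∧ ∀ v, ∑ j, c j * T v j = 0 := by
  have hrange : LinearMap.range T < ⊤ := by
    refine lt_top_iff_ne_top.mpr fun htop => ?_
    have := LinearMap.finrank_range_le T
    rw [htop, finrank_top, finrank_fintype_fun_eq_card] at this
    omega
  obtain ⟨g, hg, hker⟩ := (LinearMap.range T).exists_le_ker_of_lt_top hrange
  have hg_apply (x : ι → K) : g x = ∑ j, g (fun i => if j = i then 1 else 0) * x j := by
    simp_rw [LinearMap.pi_apply_eq_sum_univ g x, smul_eq_mul, mul_comm]
  refine ⟨fun j => g fun i => if j = i then 1 else 0, fun hc => hg ?_, fun v => ?_⟩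
  · exact LinearMap.ext fun x => by simp [hg_apply x, fun j => congrFun hc j]
  · rw [← hg_apply]
    exact hker (LinearMap.mem_range_self T v)

theorem exists_ne_zero_sum_mul_inner_sum_smul_eq_zero {𝕜 E ι κ : Type*} [RCLike 𝕜]
    [NormedAddCommGroup E] [InnerProductSpace 𝕜 E] [FiniteDimensional 𝕜 E]
    [Fintype ι] [DecidableEq ι] [Fintype κ] (x : ι → E) (B : Matrix ι κ 𝕜)
    (h : Fintype.card κ * finrank 𝕜 E < Fintype.card ι) :
    ∃ c : ι → 𝕜, c ≠ 0 ∧ ∀ v : κ → E, ∑ j, c j * inner 𝕜 (x j) (∑ i, B j i • v i) = 0 := by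
  let T : (κ → E) →ₗ[𝕜] ι → 𝕜 :=
    LinearMap.pi fun j => (innerSL 𝕜 (x j)).toLinearMap ∘ₗ ∑ i, B j i • LinearMap.proj i
  obtain ⟨c, hc, hcT⟩ := T.exists_ne_zero_sum_mul_apply_eq_zero
    (by simpa [finrank_pi_fintype] using h)
  exact ⟨c, hc, fun v => by simpa [T] using hcT v⟩

theorem exists_mem_piFinset_mul_abs_eq {ι : Type*} [Fintype ι] [DecidableEq ι] (s : ι → ℝ) :
    ∃ ε ∈ Fintype.piFinset fun _ : ι => ({-1, 1} : Finset ℝ), ∀ j, ε j * |s j| = s j := by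
  refine ⟨fun j => if 0 ≤ s j then 1 else -1, by simp [apply_ite], fun j => ?_⟩
  dsimp only
  split_ifs with hs
  · simp [abs_of_nonneg hs]
  · simp [abs_of_neg (not_le.mp hs)]

/-- The set of "achievable" tuples `(t₁, …, t_h)` — those for which there are an
injective `φ : {1, …, dℓ+1} → {1, …, h}` and vectors `u₁, …, u_{dℓ+1} ∈ ℝ^d` with
`u_j = Σᵢ a_{ji}·uᵢ` and `|⟨o_{φ(j)}, u_j⟩| = t_{φ(j)}` for all `j` — is covered by
finitely many linear hyperplanes of `ℝ^h`. -/
theorem thm_achievable_tuples_in_hyperplanes (d ℓ h : ℕ)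
    (hd : 1 ≤ d)
    (o : Fin h → EuclideanSpace ℝ (Fin d))
    (A : Matrix (Fin (d * ℓ + 1)) (Fin ℓ) ℚ) :
    ∃ Φ : Finset (EuclideanSpace ℝ (Fin h) →ₗ[ℝ] ℝ),
      (∀ f ∈ Φ, f ≠ 0) ∧
      ∀ t : EuclideanSpace ℝ (Fin h),
        (∃ φ : Fin (d * ℓ + 1) → Fin h, Function.Injective φ ∧
          ∃ u : Fin (d * ℓ + 1) → EuclideanSpace ℝ (Fin d),
            (∀ j, u j = ∑ i : Fin ℓ,
              (A j i : ℝ) • u (Fin.castLE (by nlinarith) i)) ∧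
            (∀ j, |(inner ℝ (o (φ j)) (u j) : ℝ)| = t (φ j))) →
        ∃ f ∈ Φ, f t = 0 := by
  classical
  choose c hc0 hc using fun φ : Fin (d * ℓ + 1) → Fin h =>
    exists_ne_zero_sum_mul_inner_sum_smul_eq_zero (fun j => o (φ j)) (A.map ((↑) : ℚ → ℝ))
      (by simp [Nat.mul_comm ℓ d])
  refine ⟨(univ.filter Function.Injective).biUnion fun φ =>
    (Fintype.piFinset fun _ => {-1, 1}).image fun ε => weightedSumAlong φ (ε * c φ), ?_, ?_⟩
  · simp only [mem_biUnion, mem_filter, mem_image, Fintype.mem_piFinset]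
    rintro _ ⟨φ, ⟨-, hφ⟩, ε, hε, rfl⟩
    obtain ⟨j, hj⟩ := Function.ne_iff.mp (hc0 φ)
    have hεj : ε j ≠ 0 := fun h0 => by simpa [h0] using hε j
    exact weightedSumAlong_ne_zero hφ (Function.ne_iff.mpr ⟨j, mul_ne_zero hεj hj⟩)
  · rintro t ⟨φ, hφ, u, hu, ht⟩
    obtain ⟨ε, hε, hεs⟩ := exists_mem_piFinset_mul_abs_eq fun j => inner ℝ (o (φ j)) (u j)
    refine ⟨_, mem_biUnion.mpr ⟨φ, by simpa using hφ, mem_image_of_mem _ hε⟩, ?_⟩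
    calc weightedSumAlong φ (ε * c φ) t
        _ = ∑ j, c φ j * inner ℝ (o (φ j)) (u j) := by
          refine (weightedSumAlong_apply _ _ _).trans (sum_congr rfl fun j _ => ?_)
          rw [Pi.mul_apply, ← ht, mul_right_comm, hεs, mul_comm]
        _ = 0 := by
          rw [← hc φ fun i => u (Fin.castLE (by nlinarith) i)]
          exact sum_congr rfl fun j _ => by rw [hu j]; rfl
end
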